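/- arXiv:2003.05272 — 5 statements merged into one kernel-verified Lean document; each statement's English description precedes it below -/
import Mathlib

section
/- Let G_n = K_n^{⊗ n²} and p_n = (1 − 1/n)^{n²}. Then for every finite simple graph F with t triangles, the normalized homomorphism density t_{p_n}(F, G_n) = hom(F, G_n) / (p_n^{e(F)} |G_n|^{|F|}) converges to e^{−t} as n → ∞. -/
/-!
A homomorphism `F → K_n^{⊗m}` is an `m`-tuple of proper `n`-colourings of `F`, so the normalized
density equals `(P / (n^{|F|} (1 - 1/n)^{e(F)}))^{n²}`, where `P` is the number of proper
`n`-colourings. By inclusion–exclusion over edge sets `S ⊆ E(F)`,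
`P / n^{|F|} = ∑_S (-1)^{|S|} ρ(S)` with `ρ(S)` the proportion of colourings constant on every
edge of `S`, while `(1 - 1/n)^{e(F)} = ∑_S (-1)^{|S|} n^{-|S|}`. Adding a pendant edge divides
`ρ` by `n`, and every `S` with at most three edges other than a triangle is built from pendant
edges, so for such `S` the two terms agree. A triangle has `ρ = n⁻²`, and any other `S` with at
least three edges contains a three-edge non-triangle, so `ρ(S) ≤ n⁻³`. Hence the ratio is
`1 - t/n² + O(n⁻³)`, and its `n²`-th power tends to `e^{-t}`.
-/

open Filter

/-- The `m`-th tensor power of the complete graph `K_n`. -/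
def tensorPow (n m : ℕ) : SimpleGraph (Fin m → Fin n) where
  Adj x y := x ≠ y ∧ ∀ i, x i ≠ y i
  symm := ⟨fun x y h => ⟨h.1.symm, fun i => (h.2 i).symm⟩⟩
  loopless := ⟨fun x h => h.1 rfl⟩

/-- The number of graph homomorphisms from `F` to `G`. -/
noncomputable def homCount {α β : Type*} (F : SimpleGraph α) (G : SimpleGraph β) : ℕ :=
  Nat.card (F →g G)

open Finset Fintype SimpleGraph Topology

lemma homCount_tensorPow {V : Type*} (F : SimpleGraph V) {n m : ℕ} (hm : m ≠ 0) :
    homCount F (tensorPow n m) = homCount F (completeGraph (Fin n)) ^ m := by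
  have i₀ : Fin m := ⟨0, Nat.pos_of_ne_zero hm⟩
  let e : (F →g tensorPow n m) ≃ (Fin m → F.Coloring (Fin n)) :=
    { toFun := fun φ i => Coloring.mk (fun v => φ v i) fun h => (φ.map_adj h).2 i
      invFun := fun c => ⟨fun v i => c i v, fun h =>
        ⟨fun hxy => (c i₀).valid h (congrFun hxy i₀), fun i => (c i).valid h⟩⟩
      left_inv := fun φ => rfl
      right_inv := fun c => rfl }
  rw [homCount, homCount, Nat.card_congr e, Nat.card_fun, Nat.card_eq_fintype_card (α := Fin m),
    Fintype.card_fin]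

section EdgeSets

variable {V : Type*} [DecidableEq V]

def IsTriangle (S : Finset (Sym2 V)) : Prop :=
  ∃ a b c, a ≠ b ∧ a ≠ c ∧ b ≠ c ∧ S = {s(a, b), s(a, c), s(b, c)}

lemma IsTriangle.card_eq {S : Finset (Sym2 V)} (h : IsTriangle S) : #S = 3 := by
  obtain ⟨a, b, c, hab, hac, hbc, rfl⟩ := h
  rw [card_eq_three]
  exact ⟨_, _, _, by simp [hbc, hac], by simp [hab, hac], by simp [hab, hac], rfl⟩

lemma mem_triangle_iff {a b c : V} (hab : a ≠ b) (hac : a ≠ c) (hbc : b ≠ c) {e : Sym2 V} :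
    e ∈ ({s(a, b), s(a, c), s(b, c)} : Finset (Sym2 V)) ↔
      ¬e.IsDiag ∧ ∀ v ∈ e, v ∈ ({a, b, c} : Finset V) := by
  induction e using Sym2.ind with
  | _ x y =>
    simp only [mem_insert, mem_singleton, Sym2.eq_iff, Sym2.mk_isDiag_iff, Sym2.mem_iff,
      forall_eq_or_imp, forall_eq]
    grind

lemma IsTriangle.mk_mem {S : Finset (Sym2 V)} (h : IsTriangle S) {a b c : V}
    (hab : s(a, b) ∈ S) (hac : s(a, c) ∈ S) (hbc : b ≠ c) : s(b, c) ∈ S := by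
  obtain ⟨x, y, z, hxy, hxz, hyz, rfl⟩ := h
  rw [mem_triangle_iff hxy hxz hyz] at hab hac ⊢
  exact ⟨hbc, by simp only [Sym2.mem_iff]; rintro v (rfl | rfl) <;> simp_all⟩

lemma Sym2.exists_eq_mk_notMem_of_ne {e e' : Sym2 V} (hne : e ≠ e') (hd : ¬e'.IsDiag) :
    ∃ a b, e' = s(a, b) ∧ a ≠ b ∧ b ∉ e := by
  induction e' using Sym2.ind with
  | _ x y =>
    by_cases hy : y ∈ e
    · refine ⟨y, x, Sym2.eq_swap, Ne.symm hd, fun hx => hne ?_⟩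
      exact (Sym2.mem_and_mem_iff hd).1 ⟨hx, hy⟩
    · exact ⟨x, y, rfl, hd, hy⟩

lemma Sym2.map_update_of_notMem {β : Type*} {e : Sym2 V} {b : V} (hb : b ∉ e) (f : V → β)
    (c : β) : e.map (Function.update f b c) = e.map f :=
  Sym2.map_congr fun _ hx => Function.update_of_ne (ne_of_mem_of_not_mem hx hb) _ _

lemma exists_pendant_edge {S : Finset (Sym2 V)} (hd : ∀ e ∈ S, ¬e.IsDiag) (hS : S.Nonempty)
    (h3 : #S ≤ 3) (ht : ¬IsTriangle S) :
    ∃ a b, a ≠ b ∧ s(a, b) ∈ S ∧ ∀ e ∈ S.erase s(a, b), b ∉ e := by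
  have hpos := card_pos.2 hS
  interval_cases h : #S
  · obtain ⟨e, rfl⟩ := card_eq_one.1 h
    induction e using Sym2.ind with
    | _ a b => exact ⟨a, b, hd _ (mem_singleton_self _), mem_singleton_self _, by simp⟩
  · obtain ⟨e₁, e₂, hne, rfl⟩ := card_eq_two.1 h
    obtain ⟨a, b, rfl, hab, hb⟩ := Sym2.exists_eq_mk_notMem_of_ne hne (hd e₂ (by simp))
    exact ⟨a, b, hab, by simp, by simpa [erase_insert_of_ne hne]⟩
  · obtain ⟨e₁, e₂, e₃, h12, h13, h23, rfl⟩ := card_eq_three.1 h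
    -- Without a pendant edge every endpoint lies on a second edge, which forces a triangle.
    by_contra! hleaf
    apply ht
    induction e₁ using Sym2.ind with | _ a b => ?_
    obtain ⟨c, w, rfl, hcw, hw⟩ := Sym2.exists_eq_mk_notMem_of_ne h12 (hd _ (by simp))
    have hw₃ : w ∈ e₃ := by
      obtain ⟨e, he, hwe⟩ := hleaf c w hcw (by simp)
      simp only [mem_erase, mem_insert, mem_singleton] at he
      grind
    obtain ⟨z, rfl⟩ := Sym2.mem_iff_exists.1 hw₃
    have hab : a ≠ b := hd s(a, b) (by simp)
    have hmem : ∀ x y, x ≠ y → s(x, y) = s(a, b) → y ∈ s(c, w) ∨ y ∈ s(w, z) := by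
      intro x y hxy hxy'
      obtain ⟨e, he, hye⟩ := hleaf x y hxy (by simp [hxy'])
      simp only [mem_erase, mem_insert, mem_singleton] at he
      obtain ⟨hne, rfl | rfl | rfl⟩ := he
      exacts [absurd hxy'.symm hne, .inl hye, .inr hye]
    have ha := hmem b a hab.symm Sym2.eq_swap
    have hb := hmem a b hab rfl
    simp only [Sym2.mem_iff, not_or] at ha hb hw
    have hends : (c = a ∧ z = b) ∨ (c = b ∧ z = a) := by grind
    rcases hends with ⟨rfl, rfl⟩ | ⟨rfl, rfl⟩
    · exact ⟨c, z, w, hab, Ne.symm hw.1, Ne.symm hw.2, by rw [Sym2.eq_swap (a := w)]⟩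
    · refine ⟨z, c, w, hab, Ne.symm hw.1, Ne.symm hw.2, ?_⟩
      rw [Sym2.eq_swap (a := w), pair_comm]

lemma exists_subset_card_eq_three_not_isTriangle {S : Finset (Sym2 V)} (h3 : 3 ≤ #S)
    (ht : ¬IsTriangle S) : ∃ T ⊆ S, #T = 3 ∧ ¬IsTriangle T := by
  obtain ⟨T, hTS, hT⟩ := exists_subset_card_eq h3
  by_cases hTt : IsTriangle T
  swap
  · exact ⟨T, hTS, hT, hTt⟩
  obtain ⟨e, heS, heT⟩ := exists_of_ssubset (hTS.ssubset_of_ne (by rintro rfl; exact ht hTt))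
  obtain ⟨a, b, c, hab, hac, hbc, rfl⟩ := hTt
  have hab_e : s(a, b) ≠ e := by rintro rfl; simp at heT
  have hac_e : s(a, c) ≠ e := by rintro rfl; simp at heT
  refine ⟨{s(a, b), s(a, c), e}, ?_,
    card_eq_three.2 ⟨_, _, _, by simp [hbc, hac], hab_e, hac_e, rfl⟩, fun h => heT ?_⟩
  · simp only [insert_subset_iff, singleton_subset_iff]
    exact ⟨hTS (by simp), hTS (by simp), heS⟩
  · have hbc_mem := h.mk_mem (a := a) (by simp) (by simp) hbc
    simp only [mem_insert, mem_singleton, Sym2.eq_iff] at hbc_mem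
    rcases hbc_mem with h | h | rfl <;> grind

end EdgeSets

section MonochromaticColorings

variable {V α : Type*} [Fintype V] [DecidableEq V] [Fintype α] [DecidableEq α]

variable (α) in
def monoColorings (e : Sym2 V) : Finset (V → α) := {f | (e.map f).IsDiag}

variable (α) in
def monoCount (S : Finset (Sym2 V)) : ℕ := #(S.inf (monoColorings α))

lemma mem_inf_monoColorings {S : Finset (Sym2 V)} {f : V → α} :
    f ∈ S.inf (monoColorings α) ↔ ∀ e ∈ S, (e.map f).IsDiag := by
  simp [Finset.mem_inf, monoColorings]

lemma monoCount_empty : monoCount α (∅ : Finset (Sym2 V)) = card α ^ card V := by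
  simp [monoCount]

lemma monoCount_anti {S T : Finset (Sym2 V)} (h : S ⊆ T) : monoCount α T ≤ monoCount α S :=
  card_le_card (inf_mono h)

lemma card_mul_monoCount_insert {S : Finset (Sym2 V)} {a b : V} (hab : a ≠ b)
    (hb : ∀ e ∈ S, b ∉ e) : card α * monoCount α (insert s(a, b) S) = monoCount α S := by
  have hupdate {f : V → α} (c : α) (hf : f ∈ S.inf (monoColorings α)) :
      Function.update f b c ∈ S.inf (monoColorings α) := by
    rw [mem_inf_monoColorings] at hf ⊢
    exact fun e he => (Sym2.map_update_of_notMem (hb e he) f c).symm ▸ hf e he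
  have hmem {f : V → α} : f ∈ (insert s(a, b) S).inf (monoColorings α) ↔
      f a = f b ∧ f ∈ S.inf (monoColorings α) := by
    simp [inf_insert, monoColorings]
  rw [monoCount, monoCount, mul_comm, ← card_univ, ← card_product]
  refine card_nbij' (fun p => Function.update p.1 b p.2)
    (fun g => (Function.update g b (g a), g b)) ?_ ?_ ?_ ?_
  · rintro ⟨f, c⟩ hf
    exact hupdate c (hmem.1 (mem_product.1 hf).1).2
  · intro g hg
    refine mem_product.2 ⟨hmem.2 ⟨?_, hupdate _ hg⟩, mem_univ _⟩
    simp [Function.update_of_ne hab]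
  · rintro ⟨f, c⟩ hf
    have hfab : f a = f b := (hmem.1 (mem_product.1 hf).1).1
    simp [Function.update_of_ne hab, hfab]
  · intro g _
    simp

lemma card_pow_mul_monoCount_of_not_isTriangle {S : Finset (Sym2 V)} (hd : ∀ e ∈ S, ¬e.IsDiag)
    (h3 : #S ≤ 3) (ht : ¬IsTriangle S) : card α ^ #S * monoCount α S = card α ^ card V := by
  induction hk : #S generalizing S with
  | zero => simp [card_eq_zero.1 hk, monoCount_empty]
  | succ k ih =>
    obtain ⟨a, b, hab, hmem, hleaf⟩ := exists_pendant_edge hd (card_pos.1 (by omega)) h3 ht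
    have hk' : #(S.erase s(a, b)) = k := by rw [card_erase_of_mem hmem, hk]; rfl
    have h_erase := ih (fun e he => hd e (mem_of_mem_erase he)) (by omega)
      (fun h => by have := h.card_eq; omega) hk'
    rw [← insert_erase hmem, pow_succ, mul_assoc, card_mul_monoCount_insert hab hleaf, h_erase]

lemma card_sq_mul_monoCount_of_isTriangle {S : Finset (Sym2 V)} (h : IsTriangle S) :
    card α ^ 2 * monoCount α S = card α ^ card V := by
  obtain ⟨a, b, c, hab, hac, hbc, rfl⟩ := h
  have hpair : monoCount α {s(a, b), s(a, c), s(b, c)} = monoCount α {s(a, b), s(a, c)} := by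
    refine congrArg card (ext fun f => ?_)
    simp only [mem_inf_monoColorings, mem_insert, mem_singleton, forall_eq_or_imp, forall_eq,
      Sym2.map_mk, Sym2.mk_isDiag_iff]
    grind
  have hcard : #{s(a, b), s(a, c)} = 2 := card_pair (by simp [hbc, hac])
  rw [hpair, ← hcard]
  refine card_pow_mul_monoCount_of_not_isTriangle (by simp [hab, hac]) (by omega)
    fun h => by have := h.card_eq; omega

lemma card_pow_three_mul_monoCount_le {S : Finset (Sym2 V)} (hd : ∀ e ∈ S, ¬e.IsDiag)
    (h3 : 3 ≤ #S) (ht : ¬IsTriangle S) : card α ^ 3 * monoCount α S ≤ card α ^ card V := by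
  obtain ⟨T, hTS, hT, hTt⟩ := exists_subset_card_eq_three_not_isTriangle h3 ht
  calc card α ^ 3 * monoCount α S ≤ card α ^ #T * monoCount α T := by
        rw [hT]; exact Nat.mul_le_mul_left _ (monoCount_anti hTS)
    _ = card α ^ card V :=
        card_pow_mul_monoCount_of_not_isTriangle (fun e he => hd e (hTS he)) hT.le hTt

lemma homCount_completeGraph_eq_sum (F : SimpleGraph V) [DecidableRel F.Adj] :
    (homCount F (completeGraph α) : ℤ) =
      ∑ S ∈ F.edgeFinset.powerset, (-1) ^ #S * (monoCount α S : ℤ) := by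
  have hmem {f : V → α} : f ∈ F.edgeFinset.inf (fun e => (monoColorings α e)ᶜ) ↔
      ∀ e ∈ F.edgeFinset, ¬(e.map f).IsDiag := by
    simp [Finset.mem_inf, monoColorings]
  have hcolorings : homCount F (completeGraph α) =
      #(F.edgeFinset.inf fun e => (monoColorings α e)ᶜ) := by
    rw [homCount, ← Fintype.card_coe, ← Nat.card_eq_fintype_card]
    refine Nat.card_congr
      { toFun := fun (C : F.Coloring α) => ⟨C, hmem.2 fun e he => ?_⟩
        invFun := fun f => Coloring.mk f.1 fun h =>
          hmem.1 f.2 s(_, _) (mem_edgeFinset.2 h)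
        left_inv := fun C => rfl
        right_inv := fun f => rfl }
    induction e using Sym2.ind with
    | _ v w => exact C.valid (mem_edgeFinset.1 he)
  rw [hcolorings, inclusion_exclusion_card_inf_compl]
  rfl

end MonochromaticColorings

section Triangles

variable {V : Type*} [Fintype V] [DecidableEq V] (F : SimpleGraph V) [DecidableRel F.Adj]

instance : DecidablePred (IsTriangle (V := V)) := fun _ => by unfold IsTriangle; infer_instance

lemma filter_edgeFinset_of_isClique {a b c : V} (hab : a ≠ b) (hac : a ≠ c) (hbc : b ≠ c)
    (hW : F.IsClique ({a, b, c} : Finset V)) :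
    {e ∈ F.edgeFinset | ∀ v ∈ e, v ∈ ({a, b, c} : Finset V)} = {s(a, b), s(a, c), s(b, c)} := by
  ext e
  rw [mem_filter, mem_triangle_iff hab hac hbc]
  refine ⟨fun ⟨he, hin⟩ => ⟨not_isDiag_of_mem_edgeFinset he, hin⟩, fun ⟨hd, hin⟩ => ⟨?_, hin⟩⟩
  induction e using Sym2.ind with
  | _ x y =>
    rw [mem_edgeFinset, mem_edgeSet]
    exact hW (hin x (Sym2.mem_mk_left x y)) (hin y (Sym2.mem_mk_right x y)) hd

lemma card_filter_isTriangle_powerset :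
    #{S ∈ F.edgeFinset.powerset | IsTriangle S} = #(F.cliqueFinset 3) := by
  symm
  refine card_bij (fun W _ => {e ∈ F.edgeFinset | ∀ v ∈ e, v ∈ W}) ?_ ?_ ?_
  · intro W hW
    rw [mem_cliqueFinset_iff] at hW
    obtain ⟨a, b, c, hab, hac, hbc, rfl⟩ := card_eq_three.1 hW.card_eq
    rw [mem_filter, mem_powerset, filter_edgeFinset_of_isClique F hab hac hbc hW.isClique]
    refine ⟨?_, a, b, c, hab, hac, hbc, rfl⟩
    rw [← filter_edgeFinset_of_isClique F hab hac hbc hW.isClique]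
    exact filter_subset _ _
  · intro W₁ hW₁ W₂ hW₂ h
    rw [mem_cliqueFinset_iff] at hW₁ hW₂
    obtain ⟨a, b, c, hab, hac, hbc, rfl⟩ := card_eq_three.1 hW₁.card_eq
    have hsub := (filter_edgeFinset_of_isClique F hab hac hbc hW₁.isClique).symm.trans h
    have hab₂ := (mem_filter.1 (hsub.subset (by simp : s(a, b) ∈ _))).2
    have hac₂ := (mem_filter.1 (hsub.subset (by simp : s(a, c) ∈ _))).2
    refine eq_of_subset_of_card_le ?_ (by rw [hW₁.card_eq, hW₂.card_eq])
    simp only [insert_subset_iff, singleton_subset_iff]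
    exact ⟨hab₂ a (by simp), hab₂ b (by simp), hac₂ c (by simp)⟩
  · intro S hS
    obtain ⟨hSE, a, b, c, hab, hac, hbc, rfl⟩ := (mem_filter.1 hS).imp_left mem_powerset.1
    have hadj {x y : V} (h : s(x, y) ∈ ({s(a, b), s(a, c), s(b, c)} : Finset (Sym2 V))) :
        F.Adj x y := mem_edgeFinset.1 (hSE h)
    have hW : F.IsNClique 3 {a, b, c} := is3Clique_triple_iff.2
      ⟨hadj (by simp), hadj (by simp), hadj (by simp)⟩
    exact ⟨{a, b, c}, mem_cliqueFinset_iff.2 hW,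
      filter_edgeFinset_of_isClique F hab hac hbc hW.isClique⟩

end Triangles

section Estimate

variable {V α : Type*} [Fintype V] [DecidableEq V] [Fintype α] [DecidableEq α] [Nonempty α]

lemma abs_monoCount_deviation_le {S : Finset (Sym2 V)} (hd : ∀ e ∈ S, ¬e.IsDiag) :
    |(-1) ^ #S * ((monoCount α S : ℝ) / card α ^ card V - (card α : ℝ)⁻¹ ^ #S) +
        if IsTriangle S then (card α : ℝ)⁻¹ ^ 2 - (card α : ℝ)⁻¹ ^ 3 else 0| ≤
      (card α : ℝ)⁻¹ ^ 3 := by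
  have hn : (0 : ℝ) < card α := by exact_mod_cast Fintype.card_pos
  set x := (card α : ℝ)⁻¹ with hx
  have hexact {k : ℕ} (h : card α ^ k * monoCount α S = card α ^ card V) :
      (monoCount α S : ℝ) / card α ^ card V = x ^ k := by
    have h' : (card α : ℝ) ^ k * monoCount α S = card α ^ card V := by exact_mod_cast h
    rw [div_eq_iff (by positivity), ← h', hx, inv_pow]
    field_simp
  by_cases ht : IsTriangle S
  · rw [if_pos ht, ht.card_eq, hexact (card_sq_mul_monoCount_of_isTriangle ht)]
    rw [show (-1 : ℝ) ^ 3 * (x ^ 2 - x ^ 3) + (x ^ 2 - x ^ 3) = 0 by ring, abs_zero]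
    positivity
  rw [if_neg ht, add_zero]
  rcases le_or_gt #S 3 with h3 | h3
  · rw [hexact (card_pow_mul_monoCount_of_not_isTriangle hd h3 ht), sub_self, mul_zero, abs_zero]
    positivity
  rw [abs_mul, abs_pow, abs_neg, abs_one, one_pow, one_mul]
  have hmono : (monoCount α S : ℝ) / card α ^ card V ≤ x ^ 3 := by
    have h := card_pow_three_mul_monoCount_le (α := α) hd h3.le ht
    rw [div_le_iff₀ (by positivity), hx, inv_pow, inv_mul_eq_div, le_div_iff₀ (by positivity)]
    exact_mod_cast (mul_comm _ _).trans_le h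
  have hpow : x ^ #S ≤ x ^ 3 :=
    pow_le_pow_of_le_one (by positivity)
      (inv_le_one_of_one_le₀ (by exact_mod_cast Fintype.card_pos)) h3.le
  exact abs_sub_le_of_nonneg_of_le (by positivity) hmono (by positivity) hpow

lemma abs_homCount_completeGraph_div_sub_le (F : SimpleGraph V) [DecidableRel F.Adj] :
    |(homCount F (completeGraph α) : ℝ) / card α ^ card V
        - (1 - (card α : ℝ)⁻¹) ^ #F.edgeFinset
        + #(F.cliqueFinset 3) * ((card α : ℝ)⁻¹ ^ 2 - (card α : ℝ)⁻¹ ^ 3)| ≤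
      2 ^ #F.edgeFinset * (card α : ℝ)⁻¹ ^ 3 := by
  set x := (card α : ℝ)⁻¹
  have hhom : (homCount F (completeGraph α) : ℝ) / card α ^ card V =
      ∑ S ∈ F.edgeFinset.powerset, (-1) ^ #S * ((monoCount α S : ℝ) / card α ^ card V) := by
    have h := congrArg (Int.cast : ℤ → ℝ) (homCount_completeGraph_eq_sum (α := α) F)
    push_cast at h
    simp_rw [h, sum_div, mul_div_assoc]
  have hbinom : (1 - x) ^ #F.edgeFinset = ∑ S ∈ F.edgeFinset.powerset, (-1) ^ #S * x ^ #S := by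
    rw [show 1 - x = -x + 1 by ring, ← Finset.sum_pow_mul_eq_add_pow]
    exact sum_congr rfl fun S _ => by rw [one_pow, mul_one, neg_pow]
  have htri : (#(F.cliqueFinset 3) : ℝ) * (x ^ 2 - x ^ 3) =
      ∑ S ∈ F.edgeFinset.powerset, if IsTriangle S then x ^ 2 - x ^ 3 else 0 := by
    rw [← sum_filter, sum_const, card_filter_isTriangle_powerset, nsmul_eq_mul]
  rw [hhom, hbinom, htri, ← sum_sub_distrib, ← sum_add_distrib]
  calc _ ≤ ∑ S ∈ F.edgeFinset.powerset, x ^ 3 := by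
        refine (abs_sum_le_sum_abs _ _).trans (sum_le_sum fun S hS => ?_)
        rw [← mul_sub]
        exact abs_monoCount_deviation_le fun e he =>
          not_isDiag_of_mem_edgeFinset (mem_powerset.1 hS he)
    _ = 2 ^ #F.edgeFinset * x ^ 3 := by
        rw [sum_const, card_powerset, nsmul_eq_mul]
        push_cast
        rfl

end Estimate

lemma tendsto_pow_of_tendsto_mul_sub_one {ι : Type*} {l : Filter ι} {a : ι → ℝ} {k : ι → ℕ}
    {t : ℝ} (hk : Tendsto k l atTop) (h : Tendsto (fun i => (k i : ℝ) * (a i - 1)) l (𝓝 t)) :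
    Tendsto (fun i => a i ^ k i) l (𝓝 (Real.exp t)) := by
  have hk' : Tendsto (fun i => (k i : ℝ)) l atTop := tendsto_natCast_atTop_atTop.comp hk
  have ha : Tendsto a l (𝓝 1) := by
    have h0 : Tendsto (fun i => a i - 1) l (𝓝 0) := (h.div_atTop hk').congr' <| by
      filter_upwards [hk'.eventually_gt_atTop 0] with i hi
      field_simp
    simpa using h0.add_const 1
  have hpos : ∀ᶠ i in l, 0 < a i := ha.eventually (lt_mem_nhds one_pos)
  -- `1 - a⁻¹ ≤ log a ≤ a - 1` squeezes `k log a` between two sequences tending to `t`.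
  have hlog : Tendsto (fun i => (k i : ℝ) * Real.log (a i)) l (𝓝 t) := by
    have hlow : Tendsto (fun i => (k i : ℝ) * (a i - 1) / a i) l (𝓝 t) := by
      have := h.div ha one_ne_zero
      rwa [div_one] at this
    refine tendsto_of_tendsto_of_tendsto_of_le_of_le' hlow h ?_ ?_
    · filter_upwards [hpos] with i hi
      rw [mul_div_assoc, sub_div, div_self hi.ne', one_div]
      exact mul_le_mul_of_nonneg_left (Real.one_sub_inv_le_log_of_pos hi) (Nat.cast_nonneg _)
    · filter_upwards [hpos] with i hi
      exact mul_le_mul_of_nonneg_left (Real.log_le_sub_one_of_pos hi) (Nat.cast_nonneg _)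
  refine ((Real.continuous_exp.tendsto t).comp hlog).congr' ?_
  filter_upwards [hpos] with i hi
  simp [Real.exp_nat_mul, Real.exp_log hi]

lemma tendsto_sq_mul_homCount_completeGraph_ratio_sub_one {V : Type*} [Fintype V]
    [DecidableEq V] (F : SimpleGraph V) [DecidableRel F.Adj] :
    Tendsto (fun n : ℕ => (n : ℝ) ^ 2 * ((homCount F (completeGraph (Fin n)) : ℝ) /
        ((n : ℝ) ^ card V * (1 - (n : ℝ)⁻¹) ^ #F.edgeFinset) - 1))
      atTop (𝓝 (-(#(F.cliqueFinset 3) : ℝ))) := by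
  set t : ℝ := (#(F.cliqueFinset 3) : ℝ)
  set q : ℕ → ℝ := fun n => (homCount F (completeGraph (Fin n)) : ℝ) / (n : ℝ) ^ card V
  set p : ℕ → ℝ := fun n => (1 - (n : ℝ)⁻¹) ^ #F.edgeFinset
  have hinv : Tendsto (fun n : ℕ => (n : ℝ)⁻¹) atTop (𝓝 0) := tendsto_inv_atTop_nhds_zero_nat
  have hp : Tendsto p atTop (𝓝 1) := by simpa using (hinv.const_sub 1).pow #F.edgeFinset
  have herr : Tendsto (fun n : ℕ => (n : ℝ) ^ 2 *
      (q n - p n + t * ((n : ℝ)⁻¹ ^ 2 - (n : ℝ)⁻¹ ^ 3))) atTop (𝓝 0) := by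
    refine squeeze_zero_norm' ?_ (by simpa using hinv.const_mul (2 ^ #F.edgeFinset : ℝ))
    filter_upwards [eventually_gt_atTop 0] with n hn
    have : Nonempty (Fin n) := ⟨⟨0, hn⟩⟩
    have h := abs_homCount_completeGraph_div_sub_le (α := Fin n) F
    simp only [Fintype.card_fin] at h
    rw [norm_mul, norm_pow, Real.norm_natCast, Real.norm_eq_abs]
    calc (n : ℝ) ^ 2 * |q n - p n + t * ((n : ℝ)⁻¹ ^ 2 - (n : ℝ)⁻¹ ^ 3)|
        ≤ (n : ℝ) ^ 2 * (2 ^ #F.edgeFinset * (n : ℝ)⁻¹ ^ 3) := by gcongr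
      _ = 2 ^ #F.edgeFinset * (n : ℝ)⁻¹ := by field_simp
  have hdiff : Tendsto (fun n : ℕ => (n : ℝ) ^ 2 * (q n - p n)) atTop (𝓝 (-t)) := by
    have h := herr.sub ((hinv.const_sub 1).const_mul t)
    simp only [sub_zero, mul_one, zero_sub] at h
    refine h.congr' ?_
    filter_upwards [eventually_gt_atTop 0] with n hn
    field_simp
    ring
  have hratio := hdiff.div hp one_ne_zero
  rw [div_one] at hratio
  refine hratio.congr' ?_
  filter_upwards [hp.eventually (lt_mem_nhds one_pos)] with n hn
  rw [Pi.div_apply, ← div_div, mul_div_assoc, sub_div, div_self hn.ne']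

/-- With `G_n = K_n^{⊗ n²}` and `p_n = (1 - 1/n)^{n²}`, the normalized homomorphism density
`hom(F, G_n) / (p_n^{e(F)} |G_n|^{|F|})` converges to `e^{-t}` where `t` is the number of
triangles of `F`. -/
theorem normalized_density_tendsto {V : Type*} [Fintype V] [DecidableEq V]
    (F : SimpleGraph V) [DecidableRel F.Adj] :
    Tendsto (fun n : ℕ => (homCount F (tensorPow n (n ^ 2)) : ℝ) /
        (((1 - 1 / (n : ℝ)) ^ (n ^ 2)) ^ F.edgeFinset.card
          * ((n : ℝ) ^ (n ^ 2)) ^ (Fintype.card V)))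
      atTop (nhds (Real.exp (-((F.cliqueFinset 3).card : ℝ)))) := by
  have hsq : Tendsto (fun n : ℕ => n ^ 2) atTop atTop := tendsto_pow_atTop two_ne_zero
  have hlim := tendsto_pow_of_tendsto_mul_sub_one hsq (by
    simpa only [Nat.cast_pow] using tendsto_sq_mul_homCount_completeGraph_ratio_sub_one F)
  refine hlim.congr' ?_
  filter_upwards [eventually_ne_atTop 0] with n hn
  rw [homCount_tensorPow F (pow_ne_zero 2 hn), Nat.cast_pow, one_div]
  ring
end

section
/- If a kernel W : [0,1]² → [0,∞) (symmetric, measurable, integrable) satisfies t(K_2, W) = 1 and t(C_4, W) = 1, then W = 1 almost everywhere on [0,1]². -/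
open MeasureTheory ProbabilityTheory
open scoped ENNReal

/-!
Write `d` for the degree function of `W` and `U = W ∘ W` for its codegree kernel. Cauchy–Schwarz
gives `1 = (∫ d)² ≤ ∫ d² = ∫∫ U ≤ (∫∫ U²)^(1/2) = t(C₄, W)^(1/2) = 1`, so equality holds throughout
and `d = 1`, `U = 1` a.e., since a function with `∫ h = c` and `∫ h² = c²` is a.e. equal to `c`.
The same equality case applies to the partial degrees `x ↦ ∫_A W(x, y) dy`, whose second moment
is `∫∫_{A × A} U = μ(A)²`: they are a.e. equal to `μ(A)`. So `W` and `1` have the same integral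
over every rectangle, hence `W = 1` a.e.
-/

noncomputable def μ01 : Measure ℝ := volume.restrict (Set.Icc 0 1)

instance : IsProbabilityMeasure μ01 := ⟨by simp [μ01, Real.volume_Icc]⟩

section Moments

variable {α : Type*} [MeasurableSpace α] {μ : Measure α} [IsProbabilityMeasure μ] {h : α → ℝ≥0∞}

lemma sq_lintegral_le_lintegral_sq (hh : AEMeasurable h μ) :
    (∫⁻ x, h x ∂μ) ^ 2 ≤ ∫⁻ x, h x ^ 2 ∂μ := by
  have hL2 : ∫⁻ x, h x ∂μ ≤ (∫⁻ x, h x ^ (2 : ℝ) ∂μ) ^ (1 / 2 : ℝ) := by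
    simpa using ENNReal.lintegral_mul_le_Lp_mul_Lq μ Real.HolderConjugate.two_two hh
      aemeasurable_const (g := 1)
  calc (∫⁻ x, h x ∂μ) ^ 2 ≤ ((∫⁻ x, h x ^ (2 : ℝ) ∂μ) ^ (1 / 2 : ℝ)) ^ (2 : ℝ) := by
        rw [ENNReal.rpow_two]; gcongr
    _ = ∫⁻ x, h x ^ 2 ∂μ := by
        rw [← ENNReal.rpow_mul]; norm_num

lemma ae_eq_const_of_lintegral_sq_eq {c : ℝ≥0∞} (hh : AEMeasurable h μ) (hc : c ≠ ∞)
    (h1 : ∫⁻ x, h x ∂μ = c) (h2 : ∫⁻ x, h x ^ 2 ∂μ = c ^ 2) : h =ᵐ[μ] fun _ ↦ c := by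
  have hfin : ∀ᵐ x ∂μ, h x < ∞ := ae_lt_top' hh (h1 ▸ hc)
  set X : α → ℝ := fun x ↦ (h x).toReal
  have hX : AEMeasurable X μ := hh.ennreal_toReal
  have hmean : μ[X] = c.toReal := by rw [integral_toReal hh hfin, h1]
  have hsq : ∫⁻ x, ‖X x‖ₑ ^ 2 ∂μ = c ^ 2 := by
    rw [← h2]
    refine lintegral_congr_ae ?_
    filter_upwards [hfin] with x hx
    simp [X, Real.enorm_of_nonneg, ENNReal.ofReal_toReal hx.ne]
  have hvar : evariance X μ = 0 := by
    rw [evariance_def' hX.aestronglyMeasurable, hmean, hsq, ← ENNReal.toReal_pow,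
      ENNReal.ofReal_toReal (ENNReal.pow_ne_top hc), tsub_self]
  filter_upwards [(evariance_eq_zero_iff hX).mp hvar, hfin] with x hx hxf
  rw [← ENNReal.ofReal_toReal hxf.ne, ← ENNReal.ofReal_toReal hc, ← hmean]
  exact congrArg ENNReal.ofReal hx

end Moments

namespace SymmetricKernel

variable {α : Type*} [MeasurableSpace α] {μ : Measure α} {g : α → α → ℝ≥0∞}

noncomputable def degree (g : α → α → ℝ≥0∞) (μ : Measure α) (x : α) : ℝ≥0∞ := ∫⁻ y, g x y ∂μ

noncomputable def codegree (g : α → α → ℝ≥0∞) (μ : Measure α) (x y : α) : ℝ≥0∞ :=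
  ∫⁻ z, g x z * g z y ∂μ

noncomputable def cycleFourDensity (g : α → α → ℝ≥0∞) (μ : Measure α) : ℝ≥0∞ :=
  ∫⁻ x, ∫⁻ y, ∫⁻ z, ∫⁻ w, g x y * g y z * g z w * g w x ∂μ ∂μ ∂μ ∂μ

lemma codegree_comm (hsymm : ∀ x y, g x y = g y x) (x y : α) :
    codegree g μ x y = codegree g μ y x := by
  simp only [codegree]
  exact lintegral_congr fun z ↦ by rw [hsymm x z, hsymm z y, mul_comm]

section SFinite

variable [SFinite μ]

lemma measurable_degree (hg : Measurable (Function.uncurry g)) : Measurable (degree g μ) :=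
  hg.lintegral_prod_right'

lemma measurable_codegree (hg : Measurable (Function.uncurry g)) :
    Measurable fun p : α × α ↦ codegree g μ p.1 p.2 := by
  refine Measurable.lintegral_prod_right'
    (f := fun p : (α × α) × α ↦ g p.1.1 p.2 * g p.2 p.1.2) ?_
  exact (hg.comp (measurable_fst.fst.prodMk measurable_snd)).mul
    (hg.comp (measurable_snd.prodMk measurable_fst.snd))

lemma lintegral_degree_restrict (hg : Measurable (Function.uncurry g))
    (hsymm : ∀ x y, g x y = g y x) (A : Set α) :
    ∫⁻ x, degree g (μ.restrict A) x ∂μ = ∫⁻ y in A, degree g μ y ∂μ := by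
  simp only [degree]
  rw [lintegral_lintegral_swap hg.aemeasurable]
  simp_rw [hsymm _ _]

lemma lintegral_codegree_prod (hg : Measurable (Function.uncurry g))
    (hsymm : ∀ x y, g x y = g y x) (ν : Measure α) [SFinite ν] :
    ∫⁻ p, codegree g μ p.1 p.2 ∂(ν.prod ν) = ∫⁻ z, degree g ν z ^ 2 ∂μ := by
  have hg' : ∀ x, Measurable (g x) := fun x ↦ hg.comp measurable_prodMk_left
  calc ∫⁻ p, codegree g μ p.1 p.2 ∂(ν.prod ν)
      = ∫⁻ x, ∫⁻ y, ∫⁻ z, g z x * g z y ∂μ ∂ν ∂ν := by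
        rw [lintegral_prod (fun p ↦ codegree g μ p.1 p.2) (measurable_codegree hg).aemeasurable]
        simp_rw [codegree, hsymm _ _]
    _ = ∫⁻ x, ∫⁻ z, ∫⁻ y, g z x * g z y ∂ν ∂μ ∂ν := by
        refine lintegral_congr fun x ↦ lintegral_lintegral_swap ?_
        exact ((hg.comp (measurable_snd.prodMk measurable_const)).mul
          (hg.comp (measurable_snd.prodMk measurable_fst))).aemeasurable
    _ = ∫⁻ z, ∫⁻ x, ∫⁻ y, g z x * g z y ∂ν ∂ν ∂μ := by
        refine lintegral_lintegral_swap (Measurable.lintegral_prod_right'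
          (f := fun p : (α × α) × α ↦ g p.1.2 p.1.1 * g p.1.2 p.2) ?_).aemeasurable
        exact (hg.comp (measurable_fst.snd.prodMk measurable_fst.fst)).mul
          (hg.comp (measurable_fst.snd.prodMk measurable_snd))
    _ = ∫⁻ z, degree g ν z ^ 2 ∂μ := by
        refine lintegral_congr fun z ↦ ?_
        simp_rw [degree, sq, lintegral_const_mul _ (hg' z), lintegral_mul_const _ (hg' z)]

lemma lintegral_codegree_sq (hg : Measurable (Function.uncurry g))
    (hsymm : ∀ x y, g x y = g y x) :
    ∫⁻ p, codegree g μ p.1 p.2 ^ 2 ∂(μ.prod μ) = cycleFourDensity g μ := by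
  have hU := measurable_codegree (μ := μ) hg
  have hg' : ∀ x, Measurable (g x) := fun x ↦ hg.comp measurable_prodMk_left
  have hg'' : ∀ y, Measurable (g · y) := fun y ↦ hg.comp measurable_prodMk_right
  rw [lintegral_prod (fun p ↦ codegree g μ p.1 p.2 ^ 2) (hU.pow_const 2).aemeasurable]
  refine lintegral_congr fun x ↦ ?_
  calc ∫⁻ z, codegree g μ x z ^ 2 ∂μ
      = ∫⁻ z, ∫⁻ y, g x y * g y z * codegree g μ z x ∂μ ∂μ := by
        refine lintegral_congr fun z ↦ ?_
        rw [sq]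
        nth_rw 2 [codegree_comm hsymm]
        exact (lintegral_mul_const _ ((hg' x).mul (hg'' z))).symm
    _ = ∫⁻ y, ∫⁻ z, g x y * g y z * codegree g μ z x ∂μ ∂μ :=
        lintegral_lintegral_swap (((hg' x).comp measurable_snd).mul
          (hg.comp (measurable_snd.prodMk measurable_fst)) |>.mul
          (hU.comp (measurable_fst.prodMk measurable_const))).aemeasurable
    _ = ∫⁻ y, ∫⁻ z, ∫⁻ w, g x y * g y z * g z w * g w x ∂μ ∂μ ∂μ := by
        refine lintegral_congr fun y ↦ lintegral_congr fun z ↦ ?_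
        rw [codegree,
          ← lintegral_const_mul _ (f := fun w ↦ g z w * g w x) ((hg' z).mul (hg'' x))]
        simp_rw [mul_assoc]

end SFinite

variable [IsProbabilityMeasure μ]

lemma lintegral_codegree_eq_one (hg : Measurable (Function.uncurry g))
    (hsymm : ∀ x y, g x y = g y x) (hdeg : ∫⁻ x, degree g μ x ∂μ = 1)
    (hU2 : ∫⁻ p, codegree g μ p.1 p.2 ^ 2 ∂(μ.prod μ) = 1) :
    ∫⁻ p, codegree g μ p.1 p.2 ∂(μ.prod μ) = 1 := by
  have hU := (measurable_codegree (μ := μ) hg).aemeasurable (μ := μ.prod μ)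
  refine le_antisymm (not_lt.mp fun hlt ↦ ?_) ?_
  · have := sq_lintegral_le_lintegral_sq hU
    rw [hU2] at this
    exact (one_lt_pow₀ hlt two_ne_zero).not_ge this
  · calc (1 : ℝ≥0∞) = (∫⁻ x, degree g μ x ∂μ) ^ 2 := by rw [hdeg, one_pow]
      _ ≤ ∫⁻ x, degree g μ x ^ 2 ∂μ :=
          sq_lintegral_le_lintegral_sq (measurable_degree hg).aemeasurable
      _ = _ := (lintegral_codegree_prod hg hsymm μ).symm

lemma ae_eq_one_of_degree_ae_eq_one_of_codegree_ae_eq_one (hg : Measurable (Function.uncurry g))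
    (hsymm : ∀ x y, g x y = g y x) (hdeg : ∀ᵐ x ∂μ, degree g μ x = 1)
    (hcodeg : ∀ᵐ p ∂(μ.prod μ), codegree g μ p.1 p.2 = 1) :
    ∀ᵐ p ∂(μ.prod μ), g p.1 p.2 = 1 := by
  have hdegA : ∀ A, MeasurableSet A → ∀ᵐ x ∂μ, degree g (μ.restrict A) x = μ A := by
    intro A hA
    refine ae_eq_const_of_lintegral_sq_eq (measurable_degree hg).aemeasurable
      (measure_ne_top μ A) ?_ ?_
    · rw [lintegral_degree_restrict hg hsymm, lintegral_congr_ae (ae_restrict_of_ae hdeg),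
        setLIntegral_one]
    · rw [← lintegral_codegree_prod hg hsymm, Measure.prod_restrict,
        lintegral_congr_ae (ae_restrict_of_ae hcodeg), setLIntegral_one, Measure.prod_prod, sq]
  have hdensity : (μ.prod μ).withDensity (Function.uncurry g) = μ.prod μ := by
    refine (Measure.prod_eq fun A B hA hB ↦ ?_).symm
    rw [withDensity_apply _ (hA.prod hB), ← Measure.prod_restrict,
      lintegral_prod _ hg.aemeasurable]
    change ∫⁻ x in A, degree g (μ.restrict B) x ∂μ = μ A * μ B
    rw [lintegral_congr_ae (ae_restrict_of_ae (hdegA B hB)), setLIntegral_const, mul_comm]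
  exact (withDensity_eq_iff_of_sigmaFinite hg.aemeasurable aemeasurable_const).mp
    (hdensity.trans withDensity_one.symm)

theorem ae_eq_one_of_lintegral_degree_eq_one_of_cycleFourDensity_eq_one
    (hg : Measurable (Function.uncurry g)) (hsymm : ∀ x y, g x y = g y x)
    (hK2 : ∫⁻ x, degree g μ x ∂μ = 1) (hC4 : cycleFourDensity g μ = 1) :
    ∀ᵐ p ∂(μ.prod μ), g p.1 p.2 = 1 := by
  have hU2 : ∫⁻ p, codegree g μ p.1 p.2 ^ 2 ∂(μ.prod μ) = 1 := by
    rw [lintegral_codegree_sq hg hsymm, hC4]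
  have hU := lintegral_codegree_eq_one hg hsymm hK2 hU2
  have hdeg : degree g μ =ᵐ[μ] fun _ ↦ 1 :=
    ae_eq_const_of_lintegral_sq_eq (measurable_degree hg).aemeasurable ENNReal.one_ne_top hK2
      (by rw [← lintegral_codegree_prod hg hsymm, hU, one_pow])
  have hcodeg : (fun p : α × α ↦ codegree g μ p.1 p.2) =ᵐ[μ.prod μ] fun _ ↦ 1 :=
    ae_eq_const_of_lintegral_sq_eq (measurable_codegree hg).aemeasurable ENNReal.one_ne_top hU
      (by rw [hU2, one_pow])
  exact ae_eq_one_of_degree_ae_eq_one_of_codegree_ae_eq_one hg hsymm hdeg hcodeg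

end SymmetricKernel

open SymmetricKernel

theorem kernel_eq_one_of_edge_and_C4_density_one_general (W : ℝ → ℝ → ℝ)
    (hmeas : Measurable (Function.uncurry W))
    (hsymm : ∀ x y, W x y = W y x)
    (hnonneg : ∀ x y, 0 ≤ W x y)
    (hK2 : ∫⁻ x, ∫⁻ y, ENNReal.ofReal (W x y) ∂μ01 ∂μ01 = 1)
    (hC4 : ∫⁻ x, ∫⁻ y, ∫⁻ z, ∫⁻ w,
        ENNReal.ofReal (W x y * W y z * W z w * W w x) ∂μ01 ∂μ01 ∂μ01 ∂μ01 = 1) :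
    ∀ᵐ p ∂(μ01.prod μ01), W p.1 p.2 = 1 := by
  set g : ℝ → ℝ → ℝ≥0∞ := fun x y ↦ ENNReal.ofReal (W x y)
  have hg : Measurable (Function.uncurry g) := ENNReal.measurable_ofReal.comp hmeas
  have hC4' : cycleFourDensity g μ01 = 1 := by
    simp only [ENNReal.ofReal_mul' (hnonneg _ _)] at hC4
    exact hC4
  filter_upwards [ae_eq_one_of_lintegral_degree_eq_one_of_cycleFourDensity_eq_one hg
    (fun x y ↦ by simp only [g, hsymm x y]) hK2 hC4'] with p hp
  exact ENNReal.ofReal_eq_one.mp hp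

/-- If a kernel `W : [0,1]² → [0,∞)` satisfies `t(K₂, W) = 1` and `t(C₄, W) = 1`,
then `W = 1` almost everywhere on `[0,1]²`. -/
theorem kernel_eq_one_of_edge_and_C4_density_one (W : ℝ → ℝ → ℝ)
    (hmeas : Measurable (Function.uncurry W))
    (hsymm : ∀ x y, W x y = W y x)
    (hnonneg : ∀ x y, 0 ≤ W x y)
    (hint : Integrable (Function.uncurry W) (μ01.prod μ01))
    (hK2 : ∫⁻ x, ∫⁻ y, ENNReal.ofReal (W x y) ∂μ01 ∂μ01 = 1)
    (hC4 : ∫⁻ x, ∫⁻ y, ∫⁻ z, ∫⁻ w,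
        ENNReal.ofReal (W x y * W y z * W z w * W w x) ∂μ01 ∂μ01 ∂μ01 ∂μ01 = 1) :
    ∀ᵐ p ∂(μ01.prod μ01), W p.1 p.2 = 1 :=
  kernel_eq_one_of_edge_and_C4_density_one_general W hmeas hsymm hnonneg hK2 hC4
end

section
/- There is no kernel W : [0,1]² → [0,∞) such that t(F, W) = e^{−Δ_F} for every finite simple graph F, where Δ_F is the number of triangles of F. -/
/-!
Let `d(x, y) = ∫ W(x, z) W(y, z) dz` be the codegree function of `W`. The cherry `K_{1,2}` and the
4-cycle are triangle-free, so `∫∫ d = t(K_{1,2}, W) = 1` and `∫∫ d² = t(C₄, W) = 1`: the function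
`d` has mean `1` and variance `0`, hence `d = 1` almost everywhere. But then
`t(K₃, W) = ∫∫ W d = ∫∫ W = t(K₂, W) = 1`, whereas `t(K₃, W)` should be `e⁻¹`.
-/

open MeasureTheory

/-- The homomorphism density `t(H, W) = ∫_{[0,1]^{V(H)}} ∏_{uv ∈ E(H)} W(x_u, x_v) ∏ dx_v`
of a finite graph `H` in a symmetric nonnegative kernel `W`. -/
noncomputable def kernelDensity {V : Type} [Fintype V] [DecidableEq V]
    (H : SimpleGraph V) [DecidableRel H.Adj] (W : ℝ → ℝ → ℝ)
    (hsymm : ∀ x y, W x y = W y x) : ENNReal :=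
  ∫⁻ x : V → ℝ, ∏ e ∈ H.edgeFinset,
      Sym2.lift ⟨fun u v => ENNReal.ofReal (W (x u) (x v)),
        fun u v => by show ENNReal.ofReal (W (x u) (x v)) = ENNReal.ofReal (W (x v) (x u)); rw [hsymm]⟩ e
    ∂(Measure.pi fun _ => μ01)

open scoped ENNReal

section FinPi

variable {α β : Type*} [MeasurableSpace α] [MeasurableSpace β]

theorem Measurable.comp_fin_cons {n : ℕ} {f : (Fin (n + 1) → α) → β} (hf : Measurable f)
    (a : α) : Measurable fun y : Fin n → α => f (Fin.cons a y) :=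
  hf.comp <| measurable_pi_iff.2 fun i => by
    cases i using Fin.cases <;> simp [measurable_pi_apply]

variable (μ : Measure α) [SigmaFinite μ]

theorem lintegral_pi_fin_succ {n : ℕ} {f : (Fin (n + 1) → α) → ℝ≥0∞} (hf : Measurable f) :
    ∫⁻ x, f x ∂Measure.pi (fun _ => μ) =
      ∫⁻ a, ∫⁻ y, f (Fin.cons a y) ∂Measure.pi (fun _ => μ) ∂μ := by
  have e := (measurePreserving_piFinSuccAbove (fun _ : Fin (n + 1) => μ) 0).symm
  rw [← e.lintegral_comp_emb (MeasurableEquiv.measurableEmbedding _), lintegral_prod]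
  · simp [MeasurableEquiv.piFinSuccAbove_symm_apply, Fin.insertNthEquiv]
  · exact (hf.comp e.measurable).aemeasurable

theorem lintegral_pi_fin_four {f : (Fin 4 → α) → ℝ≥0∞} (hf : Measurable f) :
    ∫⁻ x, f x ∂Measure.pi (fun _ => μ) = ∫⁻ a, ∫⁻ b, ∫⁻ c, ∫⁻ d, f ![a, b, c, d] ∂μ ∂μ ∂μ ∂μ := by
  simp only [lintegral_pi_fin_succ μ hf, lintegral_pi_fin_succ μ (hf.comp_fin_cons _),
    lintegral_pi_fin_succ μ ((hf.comp_fin_cons _).comp_fin_cons _),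
    lintegral_pi_fin_succ μ (((hf.comp_fin_cons _).comp_fin_cons _).comp_fin_cons _)]
  simp only [lintegral_unique, Measure.pi_empty_univ, mul_one, Subsingleton.elim default ![]]
  rfl

end FinPi

theorem ENNReal.two_mul_le_sq_add_one (a : ℝ≥0∞) : 2 * a ≤ a ^ 2 + 1 := by
  rcases eq_or_ne a ⊤ with rfl | ha
  · simp
  lift a to NNReal using ha
  norm_cast
  rw [← NNReal.coe_le_coe]
  push_cast
  nlinarith [sq_nonneg ((a : ℝ) - 1)]

theorem ENNReal.eq_one_of_two_mul_eq_sq_add_one {a : ℝ≥0∞} (ha : a ≠ ⊤)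
    (h : 2 * a = a ^ 2 + 1) : a = 1 := by
  lift a to NNReal using ha
  have h' : (2 * a : ℝ) = a ^ 2 + 1 := by exact_mod_cast h
  exact_mod_cast (show (a : ℝ) = 1 by nlinarith [sq_nonneg ((a : ℝ) - 1)])

theorem ae_eq_one_of_lintegral_eq_one_of_lintegral_sq_eq_one {Ω : Type*} [MeasurableSpace Ω]
    {ν : Measure Ω} [IsProbabilityMeasure ν] {f : Ω → ℝ≥0∞} (hf : AEMeasurable f ν)
    (h₁ : ∫⁻ ω, f ω ∂ν = 1) (h₂ : ∫⁻ ω, f ω ^ 2 ∂ν = 1) : ∀ᵐ ω ∂ν, f ω = 1 := by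
  have h_two_mul : ∫⁻ ω, 2 * f ω ∂ν = 2 := by rw [lintegral_const_mul'' _ hf, h₁, mul_one]
  have h_sq_add : ∫⁻ ω, f ω ^ 2 + 1 ∂ν = 2 := by
    rw [lintegral_add_right _ measurable_const, h₂, lintegral_one, measure_univ,
      one_add_one_eq_two]
  -- `2f ≤ f² + 1` pointwise, with equal finite integrals, so equality holds a.e.
  have h_eq : ∀ᵐ ω ∂ν, 2 * f ω = f ω ^ 2 + 1 :=
    ae_eq_of_ae_le_of_lintegral_le (ae_of_all _ fun ω => ENNReal.two_mul_le_sq_add_one (f ω))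
      (by simp [h_two_mul]) ((hf.pow_const 2).add aemeasurable_const)
      (by rw [h_two_mul, h_sq_add])
  filter_upwards [h_eq, ae_lt_top' hf (h₁ ▸ ENNReal.one_ne_top)] with ω hω hω_fin
  exact ENNReal.eq_one_of_two_mul_eq_sq_add_one hω_fin.ne hω

instance inst_s7 : IsProbabilityMeasure μ01 := ⟨by simp [μ01]⟩

section KernelDensity

variable {W : ℝ → ℝ → ℝ} (hsymm : ∀ x y, W x y = W y x)

noncomputable def edgeWeight {V : Type} (x : V → ℝ) : Sym2 V → ℝ≥0∞ :=
  Sym2.lift ⟨fun u v => ENNReal.ofReal (W (x u) (x v)), fun _ _ => congrArg _ (hsymm _ _)⟩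

variable (hW : Measurable (Function.uncurry W))
include hW

theorem measurable_prod_edgeWeight {V : Type} (s : Finset (Sym2 V)) :
    Measurable fun x : V → ℝ => ∏ e ∈ s, edgeWeight hsymm x e := by
  refine Finset.measurable_prod _ fun e _ => ?_
  induction e using Sym2.ind with
  | h u v =>
    have : Measurable fun x : V → ℝ => W (x u) (x v) :=
      hW.comp (f := fun x : V → ℝ => (x u, x v)) (by fun_prop)
    exact this.ennreal_ofReal

theorem kernelDensity_eq_lintegral_fin_four (H : SimpleGraph (Fin 4)) [DecidableRel H.Adj] :
    kernelDensity H W hsymm = ∫⁻ a, ∫⁻ b, ∫⁻ c, ∫⁻ d,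
      ∏ e ∈ H.edgeFinset, edgeWeight hsymm ![a, b, c, d] e ∂μ01 ∂μ01 ∂μ01 ∂μ01 :=
  lintegral_pi_fin_four μ01 (measurable_prod_edgeWeight hsymm hW _)

end KernelDensity

noncomputable def codegree (W : ℝ → ℝ → ℝ) (x y : ℝ) : ℝ≥0∞ :=
  ∫⁻ z, ENNReal.ofReal (W x z) * ENNReal.ofReal (W y z) ∂μ01

section Codegree

variable {W : ℝ → ℝ → ℝ} (hW : Measurable (Function.uncurry W))
include hW

theorem measurable_codegree_integrand (x y : ℝ) :
    Measurable fun z => ENNReal.ofReal (W x z) * ENNReal.ofReal (W y z) :=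
  (hW.comp measurable_prodMk_left).ennreal_ofReal.mul (hW.comp measurable_prodMk_left).ennreal_ofReal

theorem measurable_codegree : Measurable (Function.uncurry (codegree W)) :=
  Measurable.lintegral_prod_right' (f := fun q : (ℝ × ℝ) × ℝ =>
    ENNReal.ofReal (W q.1.1 q.2) * ENNReal.ofReal (W q.1.2 q.2))
    ((hW.comp (f := fun q : (ℝ × ℝ) × ℝ => (q.1.1, q.2)) (by fun_prop)).ennreal_ofReal.mul
      (hW.comp (f := fun q : (ℝ × ℝ) × ℝ => (q.1.2, q.2)) (by fun_prop)).ennreal_ofReal)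

end Codegree

/- The test graphs all live on `Fin 4`, padded with isolated vertices (which do not change
densities), so that one four-fold integral computes every density; vertices `0, 1` come outermost,
so the integrals over the common neighbours `2, 3` produce codegrees. -/

abbrev edgeGraph : SimpleGraph (Fin 4) := SimpleGraph.fromRel fun i j => i = 0 ∧ j = 1

abbrev cherryGraph : SimpleGraph (Fin 4) := SimpleGraph.fromRel fun i j => i < 2 ∧ j = 2

abbrev squareGraph : SimpleGraph (Fin 4) := SimpleGraph.fromRel fun i j => i < 2 ∧ 2 ≤ j

abbrev triangleGraph : SimpleGraph (Fin 4) := SimpleGraph.fromRel fun i j => i < j ∧ j < 3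

section TestGraphs

variable {W : ℝ → ℝ → ℝ} (hsymm : ∀ x y, W x y = W y x) (hW : Measurable (Function.uncurry W))
include hW

theorem kernelDensity_edgeGraph :
    kernelDensity edgeGraph W hsymm = ∫⁻ a, ∫⁻ b, ENNReal.ofReal (W a b) ∂μ01 ∂μ01 := by
  rw [kernelDensity_eq_lintegral_fin_four hsymm hW,
    show edgeGraph.edgeFinset = {s(0, 1)} by decide]
  simp [edgeWeight]

theorem kernelDensity_cherryGraph :
    kernelDensity cherryGraph W hsymm = ∫⁻ a, ∫⁻ b, codegree W a b ∂μ01 ∂μ01 := by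
  rw [kernelDensity_eq_lintegral_fin_four hsymm hW,
    show cherryGraph.edgeFinset = {s(0, 2), s(1, 2)} by decide]
  simp [edgeWeight, codegree]

theorem kernelDensity_squareGraph :
    kernelDensity squareGraph W hsymm = ∫⁻ a, ∫⁻ b, codegree W a b ^ 2 ∂μ01 ∂μ01 := by
  rw [kernelDensity_eq_lintegral_fin_four hsymm hW,
    show squareGraph.edgeFinset = {s(0, 2), s(1, 2), s(0, 3), s(1, 3)} by decide]
  refine lintegral_congr fun a => lintegral_congr fun b => ?_
  simp only [edgeWeight, codegree, sq]
  rw [← lintegral_mul_const _ (measurable_codegree_integrand hW a b)]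
  refine lintegral_congr fun c => ?_
  rw [← lintegral_const_mul _ (measurable_codegree_integrand hW a b)]
  simp [mul_assoc]

theorem kernelDensity_triangleGraph :
    kernelDensity triangleGraph W hsymm =
      ∫⁻ a, ∫⁻ b, ENNReal.ofReal (W a b) * codegree W a b ∂μ01 ∂μ01 := by
  rw [kernelDensity_eq_lintegral_fin_four hsymm hW,
    show triangleGraph.edgeFinset = {s(0, 1), s(0, 2), s(1, 2)} by decide]
  simp [edgeWeight, codegree, lintegral_const_mul _ (measurable_codegree_integrand hW _ _)]

theorem kernelDensity_triangleGraph_eq_edgeGraph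
    (hcherry : kernelDensity cherryGraph W hsymm = 1)
    (hsquare : kernelDensity squareGraph W hsymm = 1) :
    kernelDensity triangleGraph W hsymm = kernelDensity edgeGraph W hsymm := by
  have hcod := measurable_codegree hW
  have hw : Measurable fun p : ℝ × ℝ => ENNReal.ofReal (W p.1 p.2) := hW.ennreal_ofReal
  have hcod_one : ∀ᵐ p ∂μ01.prod μ01, Function.uncurry (codegree W) p = 1 :=
    ae_eq_one_of_lintegral_eq_one_of_lintegral_sq_eq_one hcod.aemeasurable
      ((lintegral_prod _ hcod.aemeasurable).trans
        ((kernelDensity_cherryGraph hsymm hW).symm.trans hcherry))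
      ((lintegral_prod _ (hcod.pow_const 2).aemeasurable).trans
        ((kernelDensity_squareGraph hsymm hW).symm.trans hsquare))
  rw [kernelDensity_triangleGraph hsymm hW, kernelDensity_edgeGraph hsymm hW]
  calc ∫⁻ a, ∫⁻ b, ENNReal.ofReal (W a b) * codegree W a b ∂μ01 ∂μ01
      = ∫⁻ p, ENNReal.ofReal (W p.1 p.2) * Function.uncurry (codegree W) p ∂μ01.prod μ01 :=
        (lintegral_prod _ (hw.mul hcod).aemeasurable).symm
    _ = ∫⁻ p, ENNReal.ofReal (W p.1 p.2) ∂μ01.prod μ01 :=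
        lintegral_congr_ae (hcod_one.mono fun p hp => by simp [hp])
    _ = ∫⁻ a, ∫⁻ b, ENNReal.ofReal (W a b) ∂μ01 ∂μ01 := lintegral_prod _ hw.aemeasurable

end TestGraphs

/-- There is no kernel `W : [0,1]² → [0,∞)` whose `F`-density equals `e^{-Δ_F}` for every
finite simple graph `F`, where `Δ_F` is the number of triangles of `F`. -/
theorem no_kernel_with_triangle_densities :
    ¬ ∃ (W : ℝ → ℝ → ℝ) (hsymm : ∀ x y, W x y = W y x),
      Measurable (Function.uncurry W) ∧ (∀ x y, 0 ≤ W x y) ∧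
      ∀ (V : Type) [Fintype V] [DecidableEq V] (F : SimpleGraph V) [DecidableRel F.Adj],
        kernelDensity F W hsymm
          = ENNReal.ofReal (Real.exp (-((F.cliqueFinset 3).card : ℝ))) := by
  rintro ⟨W, hsymm, hW, -, hdens⟩
  have h := kernelDensity_triangleGraph_eq_edgeGraph hsymm hW
    (by simp [hdens, show (cherryGraph.cliqueFinset 3).card = 0 by decide])
    (by simp [hdens, show (squareGraph.cliqueFinset 3).card = 0 by decide])
  simp [hdens, show (triangleGraph.cliqueFinset 3).card = 1 by decide,
    show (edgeGraph.cliqueFinset 3).card = 0 by decide] at h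
end

section
/- For any symmetric bounded measurable function U : [0,1]² → ℝ, the cut norm satisfies ‖U‖_□^4 ≤ t(C_4, U), where t(C_4, U) = ∫ U(x,y)U(y,z)U(z,w)U(w,x) dx dy dz dw. -/
open MeasureTheory

/-- The cut norm `‖U‖_□ = sup_{A,B ⊆ [0,1]} |∫_{A×B} U|` of a kernel on `[0,1]²`. -/
noncomputable def cutNorm (U : ℝ → ℝ → ℝ) : ℝ :=
  sSup { r | ∃ A B : Set ℝ, MeasurableSet A ∧ MeasurableSet B ∧
    A ⊆ Set.Icc 0 1 ∧ B ⊆ Set.Icc 0 1 ∧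
    r = |∫ x in A, ∫ y in B, U x y ∂volume ∂volume| }

section Helpers

variable {α : Type*} [MeasurableSpace α] {ν : Measure α}

lemma bdd_integrable [IsFiniteMeasure ν] {f : α → ℝ} (hf : AEStronglyMeasurable f ν)
    {C : ℝ} (h : ∀ x, |f x| ≤ C) : Integrable f ν :=
  (integrable_const C).mono' hf (Filter.Eventually.of_forall fun x => by
    simpa [Real.norm_eq_abs] using h x)

lemma abs_integral_le_of_prob [IsProbabilityMeasure ν] {f : α → ℝ} {C : ℝ}
    (h : ∀ x, |f x| ≤ C) : |∫ x, f x ∂ν| ≤ C := by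
  have := norm_integral_le_of_norm_le_const (μ := ν) (f := f) (C := C)
    (Filter.Eventually.of_forall fun x => by simpa [Real.norm_eq_abs] using h x)
  simpa [Real.norm_eq_abs] using this

lemma integral_cauchy_schwarz (ν : Measure α) {f g : α → ℝ}
    (hfg : Integrable (fun x => f x * g x) ν)
    (hf2 : Integrable (fun x => f x * f x) ν)
    (hg2 : Integrable (fun x => g x * g x) ν) :
    (∫ x, f x * g x ∂ν) ^ 2 ≤ (∫ x, f x * f x ∂ν) * (∫ x, g x * g x ∂ν) := by
  set a := ∫ x, f x * f x ∂ν with ha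
  set b := ∫ x, f x * g x ∂ν with hb
  set c := ∫ x, g x * g x ∂ν with hc
  have key : ∀ t : ℝ, 0 ≤ a * (t * t) + (2 * b) * t + c := by
    intro t
    have hexp : ∀ x, (t * f x + g x) * (t * f x + g x)
        = (t * t) * (f x * f x) + (2 * t) * (f x * g x) + g x * g x := fun x => by ring
    have h1 : Integrable (fun x => (t * t) * (f x * f x) + (2 * t) * (f x * g x)) ν :=
      (hf2.const_mul _).add (hfg.const_mul _)
    have heq : ∫ x, (t * f x + g x) * (t * f x + g x) ∂ν
        = a * (t * t) + (2 * b) * t + c := by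
      simp_rw [hexp]
      rw [integral_add h1 hg2, integral_add (hf2.const_mul _) (hfg.const_mul _),
        integral_const_mul, integral_const_mul]
      ring
    have h0 : 0 ≤ ∫ x, (t * f x + g x) * (t * f x + g x) ∂ν :=
      integral_nonneg fun x => mul_self_nonneg _
    linarith [heq ▸ h0]
  have hd := discrim_le_zero key
  rw [discrim] at hd
  nlinarith [hd]

lemma meas_comp {β : Type*} [MeasurableSpace β] {U : ℝ → ℝ → ℝ}
    (hmeas : Measurable (Function.uncurry U)) {a b : β → ℝ}
    (ha : Measurable a) (hb : Measurable b) :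
    Measurable fun p => U (a p) (b p) :=
  hmeas.comp (ha.prodMk hb)

end Helpers

/-- For a symmetric bounded measurable `U : [0,1]² → ℝ`, `‖U‖_□^4 ≤ t(C₄, U)`. -/
theorem cutNorm_pow_four_le_C4_density (U : ℝ → ℝ → ℝ)
    (hmeas : Measurable (Function.uncurry U))
    (hsymm : ∀ x y, U x y = U y x)
    (hbdd : ∃ C : ℝ, ∀ x y, |U x y| ≤ C) :
    cutNorm U ^ 4 ≤
      ∫ x, ∫ y, ∫ z, ∫ w, U x y * U y z * U z w * U w x ∂μ01 ∂μ01 ∂μ01 ∂μ01 := by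
  obtain ⟨C₀, hC₀⟩ := hbdd
  set C : ℝ := max C₀ 0 with hCdef
  have hC : ∀ x y, |U x y| ≤ C := fun x y => (hC₀ x y).trans (le_max_left _ _)
  have hC0 : 0 ≤ C := le_max_right _ _
  haveI : IsProbabilityMeasure μ01 := ⟨by simp [μ01, Real.volume_Icc]⟩
  set P : Measure (ℝ × ℝ) := μ01.prod μ01 with hPdef
  -- the "codegree" kernel
  set W : ℝ → ℝ → ℝ := fun y z => ∫ t, U y t * U t z ∂μ01 with hWdef
  have mW : Measurable (Function.uncurry W) := by
    have hm : Measurable fun q : (ℝ × ℝ) × ℝ => U q.1.1 q.2 * U q.2 q.1.2 :=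
      (meas_comp hmeas (measurable_fst.comp measurable_fst) measurable_snd).mul
        (meas_comp hmeas measurable_snd (measurable_snd.comp measurable_fst))
    exact hm.stronglyMeasurable.integral_prod_right'.measurable
  have hWb : ∀ y z, |W y z| ≤ C * C := by
    intro y z
    refine abs_integral_le_of_prob fun t => ?_
    calc |U y t * U t z| = |U y t| * |U t z| := abs_mul _ _
      _ ≤ C * C := mul_le_mul (hC _ _) (hC _ _) (abs_nonneg _) hC0
  have hWsymm : ∀ y z, W y z = W z y := by
    intro y z
    simp only [hWdef]
    congr 1
    funext t
    rw [hsymm y t, hsymm t z]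
    ring
  -- the RHS equals ∫ W² over the product measure
  set T : ℝ := ∫ p, W p.1 p.2 * W p.1 p.2 ∂P with hTdef
  have hT0 : 0 ≤ T := integral_nonneg fun p => mul_self_nonneg _
  have hRHS : (∫ x, ∫ y, ∫ z, ∫ w, U x y * U y z * U z w * U w x ∂μ01 ∂μ01 ∂μ01 ∂μ01) = T := by
    have inner1 : ∀ x y z, (∫ w, U x y * U y z * U z w * U w x ∂μ01)
        = U x y * U y z * W z x := by
      intro x y z
      have : (fun w => U x y * U y z * U z w * U w x)
          = fun w => (U x y * U y z) * (U z w * U w x) := by funext w; ring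
      rw [this, integral_const_mul]
    have hJ : ∀ x, (∫ y, ∫ z, ∫ w, U x y * U y z * U z w * U w x ∂μ01 ∂μ01 ∂μ01)
        = ∫ z, W x z * W x z ∂μ01 := by
      intro x
      have step1 : (∫ y, ∫ z, ∫ w, U x y * U y z * U z w * U w x ∂μ01 ∂μ01 ∂μ01)
          = ∫ y, ∫ z, U x y * U y z * W z x ∂μ01 ∂μ01 := by
        congr 1; funext y; congr 1; funext z; exact inner1 x y z
      have hint : Integrable (Function.uncurry fun y z => U x y * U y z * W z x) P := by
        refine bdd_integrable ?_ (C := C * C * (C * C)) ?_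
        · exact (((meas_comp hmeas measurable_const measurable_fst).mul
            (meas_comp hmeas measurable_fst measurable_snd)).mul
            ((mW.comp (measurable_snd.prodMk measurable_const)))).aestronglyMeasurable
        · rintro ⟨y, z⟩
          simp only [Function.uncurry]
          calc |U x y * U y z * W z x| = |U x y| * |U y z| * |W z x| := by
                rw [abs_mul, abs_mul]
            _ ≤ C * C * (C * C) := by
                have := hWb z x
                have h1 := hC x y
                have h2 := hC y z
                have hWnn : (0:ℝ) ≤ C * C := mul_nonneg hC0 hC0
                exact mul_le_mul (mul_le_mul h1 h2 (abs_nonneg _) hC0) this (abs_nonneg _) hWnn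
      have step2 : (∫ y, ∫ z, U x y * U y z * W z x ∂μ01 ∂μ01)
          = ∫ z, ∫ y, U x y * U y z * W z x ∂μ01 ∂μ01 :=
        integral_integral_swap hint
      have step3 : ∀ z, (∫ y, U x y * U y z * W z x ∂μ01) = W x z * W x z := by
        intro z
        have : (fun y => U x y * U y z * W z x) = fun y => (U x y * U y z) * W z x := by
          funext y; ring
        rw [this, integral_mul_const]
        have hwz : (∫ y, U x y * U y z ∂μ01) = W x z := rfl
        rw [hwz, hWsymm z x]
      rw [step1, step2]
      congr 1; funext z; exact step3 z
    have : (fun x => ∫ y, ∫ z, ∫ w, U x y * U y z * U z w * U w x ∂μ01 ∂μ01 ∂μ01)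
        = fun x => ∫ z, W x z * W x z ∂μ01 := funext hJ
    rw [this, hTdef, hPdef]
    refine integral_integral (f := fun x z => W x z * W x z) ?_
    refine bdd_integrable ?_ (C := (C * C) * (C * C)) ?_
    · exact (mW.mul mW).aestronglyMeasurable
    · rintro ⟨x, z⟩
      simp only [Function.uncurry]
      rw [abs_mul]
      exact mul_le_mul (hWb x z) (hWb x z) (abs_nonneg _) (mul_nonneg hC0 hC0)
  -- the key estimate for a pair of sets
  have key : ∀ A B : Set ℝ, MeasurableSet A → MeasurableSet B →
      A ⊆ Set.Icc 0 1 → B ⊆ Set.Icc 0 1 →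
      |∫ x in A, ∫ y in B, U x y ∂volume ∂volume| ^ 4 ≤ T := by
    intro A B hA hB hAs hBs
    set f : ℝ → ℝ := A.indicator (fun _ => (1:ℝ)) with hfdef
    set g : ℝ → ℝ := B.indicator (fun _ => (1:ℝ)) with hgdef
    have mf : Measurable f := measurable_const.indicator hA
    have mg : Measurable g := measurable_const.indicator hB
    have hf1 : ∀ x, |f x| ≤ 1 := by
      intro x; by_cases hx : x ∈ A <;> simp [hfdef, hx]
    have hg1 : ∀ y, |g y| ≤ 1 := by
      intro y; by_cases hy : y ∈ B <;> simp [hgdef, hy]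
    set h : ℝ → ℝ := fun x => ∫ y, g y * U x y ∂μ01 with hhdef
    have mh : Measurable h := by
      have hm : Measurable fun q : ℝ × ℝ => g q.2 * U q.1 q.2 :=
        (mg.comp measurable_snd).mul (meas_comp hmeas measurable_fst measurable_snd)
      exact hm.stronglyMeasurable.integral_prod_right'.measurable
    have hhb : ∀ x, |h x| ≤ C := by
      intro x
      refine abs_integral_le_of_prob fun y => ?_
      calc |g y * U x y| = |g y| * |U x y| := abs_mul _ _
        _ ≤ 1 * C := mul_le_mul (hg1 y) (hC x y) (abs_nonneg _) zero_le_one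
        _ = C := one_mul C
    have hres : ∀ (s : Set ℝ), MeasurableSet s → s ⊆ Set.Icc (0:ℝ) 1 →
        volume.restrict s = μ01.restrict s := by
      intro s hs hsub
      rw [μ01, Measure.restrict_restrict hs, Set.inter_eq_self_of_subset_left hsub]
    -- Step A: rewrite the cut integral
    have hr : (∫ x in A, ∫ y in B, U x y ∂volume ∂volume) = ∫ x, f x * h x ∂μ01 := by
      calc (∫ x in A, ∫ y in B, U x y ∂volume ∂volume)
          = ∫ x in A, ∫ y in B, U x y ∂volume ∂μ01 := by rw [hres A hA hAs]
        _ = ∫ x, A.indicator (fun x => ∫ y in B, U x y ∂volume) x ∂μ01 :=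
            (integral_indicator hA).symm
        _ = ∫ x, f x * h x ∂μ01 := by
            congr 1; funext x
            by_cases hx : x ∈ A
            · rw [Set.indicator_of_mem hx, hfdef, Set.indicator_of_mem hx, one_mul]
              rw [hres B hB hBs, ← integral_indicator hB]
              congr 1; funext y
              by_cases hy : y ∈ B
              · rw [Set.indicator_of_mem hy, hgdef, Set.indicator_of_mem hy, one_mul]
              · rw [Set.indicator_of_notMem hy, hgdef, Set.indicator_of_notMem hy, zero_mul]
            · rw [Set.indicator_of_notMem hx, hfdef, Set.indicator_of_notMem hx, zero_mul]
    -- integrabilities over μ01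
    have ifh : Integrable (fun x => f x * h x) μ01 := by
      refine bdd_integrable ((mf.mul mh).aestronglyMeasurable) (C := 1 * C) fun x => ?_
      rw [abs_mul]
      exact mul_le_mul (hf1 x) (hhb x) (abs_nonneg _) zero_le_one
    have iff2 : Integrable (fun x => f x * f x) μ01 := by
      refine bdd_integrable ((mf.mul mf).aestronglyMeasurable) (C := 1 * 1) fun x => ?_
      rw [abs_mul]
      exact mul_le_mul (hf1 x) (hf1 x) (abs_nonneg _) zero_le_one
    have ihh : Integrable (fun x => h x * h x) μ01 := by
      refine bdd_integrable ((mh.mul mh).aestronglyMeasurable) (C := C * C) fun x => ?_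
      rw [abs_mul]
      exact mul_le_mul (hhb x) (hhb x) (abs_nonneg _) hC0
    -- Step B: first Cauchy–Schwarz
    have hS0 : 0 ≤ ∫ x, h x * h x ∂μ01 := integral_nonneg fun x => mul_self_nonneg _
    have hB1 : (∫ x, f x * h x ∂μ01) ^ 2 ≤ ∫ x, h x * h x ∂μ01 := by
      have hcs := integral_cauchy_schwarz μ01 ifh iff2 ihh
      have hff_le : (∫ x, f x * f x ∂μ01) ≤ 1 := by
        calc (∫ x, f x * f x ∂μ01) ≤ ∫ _, (1:ℝ) ∂μ01 := by
              refine integral_mono iff2 (integrable_const 1) fun x => ?_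
              have := hf1 x
              nlinarith [abs_nonneg (f x), le_abs_self (f x * f x), abs_mul (f x) (f x)]
          _ = 1 := by simp
      have hff_nn : 0 ≤ ∫ x, f x * f x ∂μ01 := integral_nonneg fun x => mul_self_nonneg _
      nlinarith
    -- Step C: rewrite ∫ h² as a product-measure integral
    have hSC : (∫ x, h x * h x ∂μ01)
        = ∫ p, (g p.1 * g p.2) * W p.1 p.2 ∂P := by
      have hx2 : ∀ x, h x * h x
          = ∫ p : ℝ × ℝ, (g p.1 * U x p.1) * (g p.2 * U x p.2) ∂P := by
        intro x
        rw [hPdef, integral_prod_mul (f := fun y => g y * U x y) (g := fun z => g z * U x z)]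
      have hint : Integrable
          (Function.uncurry fun x (p : ℝ × ℝ) => (g p.1 * U x p.1) * (g p.2 * U x p.2))
          (μ01.prod P) := by
        refine bdd_integrable ?_ (C := (1 * C) * (1 * C)) ?_
        · refine Measurable.aestronglyMeasurable ?_
          have m1 : Measurable fun q : ℝ × (ℝ × ℝ) => g q.2.1 * U q.1 q.2.1 :=
            (mg.comp (measurable_fst.comp measurable_snd)).mul
              (meas_comp hmeas measurable_fst (measurable_fst.comp measurable_snd))
          have m2 : Measurable fun q : ℝ × (ℝ × ℝ) => g q.2.2 * U q.1 q.2.2 :=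
            (mg.comp (measurable_snd.comp measurable_snd)).mul
              (meas_comp hmeas measurable_fst (measurable_snd.comp measurable_snd))
          exact m1.mul m2
        · rintro ⟨x, y, z⟩
          simp only [Function.uncurry]
          rw [abs_mul, abs_mul, abs_mul]
          have b1 : |g y| * |U x y| ≤ 1 * C :=
            mul_le_mul (hg1 y) (hC x y) (abs_nonneg _) zero_le_one
          have b2 : |g z| * |U x z| ≤ 1 * C :=
            mul_le_mul (hg1 z) (hC x z) (abs_nonneg _) zero_le_one
          exact mul_le_mul b1 b2 (mul_nonneg (abs_nonneg _) (abs_nonneg _))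
            (by nlinarith)
      calc (∫ x, h x * h x ∂μ01)
          = ∫ x, ∫ p : ℝ × ℝ, (g p.1 * U x p.1) * (g p.2 * U x p.2) ∂P ∂μ01 := by
            congr 1; funext x; exact hx2 x
        _ = ∫ p : ℝ × ℝ, ∫ x, (g p.1 * U x p.1) * (g p.2 * U x p.2) ∂μ01 ∂P :=
            integral_integral_swap hint
        _ = ∫ p, (g p.1 * g p.2) * W p.1 p.2 ∂P := by
            congr 1; funext p
            have : (fun x => (g p.1 * U x p.1) * (g p.2 * U x p.2))
                = fun x => (g p.1 * g p.2) * (U x p.1 * U x p.2) := by funext x; ring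
            rw [this, integral_const_mul]
            congr 1
            rw [hWdef]
            congr 1; funext x
            rw [hsymm p.1 x]
    -- Step D: second Cauchy–Schwarz, over the product measure
    have mGP : Measurable fun p : ℝ × ℝ => W p.1 p.2 := mW
    have mgg : Measurable fun p : ℝ × ℝ => g p.1 * g p.2 :=
      (mg.comp measurable_fst).mul (mg.comp measurable_snd)
    have igW : Integrable (fun p : ℝ × ℝ => (g p.1 * g p.2) * W p.1 p.2) P := by
      refine bdd_integrable ((mgg.mul mGP).aestronglyMeasurable)
        (C := (1 * 1) * (C * C)) fun p => ?_
      rw [abs_mul, abs_mul]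
      exact mul_le_mul
        (mul_le_mul (hg1 p.1) (hg1 p.2) (abs_nonneg _) zero_le_one)
        (hWb p.1 p.2) (abs_nonneg _) (by norm_num)
    have igg : Integrable (fun p : ℝ × ℝ => (g p.1 * g p.2) * (g p.1 * g p.2)) P := by
      refine bdd_integrable ((mgg.mul mgg).aestronglyMeasurable)
        (C := (1 * 1) * (1 * 1)) fun p => ?_
      rw [abs_mul, abs_mul]
      have b1 : |g p.1| * |g p.2| ≤ 1 * 1 :=
        mul_le_mul (hg1 p.1) (hg1 p.2) (abs_nonneg _) zero_le_one
      exact mul_le_mul b1 b1 (mul_nonneg (abs_nonneg _) (abs_nonneg _)) (by norm_num)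
    have iWW : Integrable (fun p : ℝ × ℝ => W p.1 p.2 * W p.1 p.2) P := by
      refine bdd_integrable ((mGP.mul mGP).aestronglyMeasurable)
        (C := (C * C) * (C * C)) fun p => ?_
      rw [abs_mul]
      exact mul_le_mul (hWb p.1 p.2) (hWb p.1 p.2) (abs_nonneg _) (mul_nonneg hC0 hC0)
    have hD : (∫ p, (g p.1 * g p.2) * W p.1 p.2 ∂P) ^ 2 ≤ T := by
      have hcs := integral_cauchy_schwarz P igW igg iWW
      have hgg_le : (∫ p, (g p.1 * g p.2) * (g p.1 * g p.2) ∂P) ≤ 1 := by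
        haveI : IsProbabilityMeasure P := by rw [hPdef]; infer_instance
        calc (∫ p, (g p.1 * g p.2) * (g p.1 * g p.2) ∂P) ≤ ∫ _, (1:ℝ) ∂P := by
              refine integral_mono igg (integrable_const 1) fun p => ?_
              have h1 := hg1 p.1
              have h2 := hg1 p.2
              have habs1 : |g p.1 * g p.2| ≤ 1 := by
                rw [abs_mul]
                simpa using mul_le_mul h1 h2 (abs_nonneg _) zero_le_one
              have := abs_mul_abs_self (g p.1 * g p.2)
              nlinarith [abs_nonneg (g p.1 * g p.2)]
          _ = 1 := by simp
      have hgg_nn : 0 ≤ ∫ p, (g p.1 * g p.2) * (g p.1 * g p.2) ∂P :=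
        integral_nonneg fun p => mul_self_nonneg _
      have hWW_nn : 0 ≤ ∫ p, W p.1 p.2 * W p.1 p.2 ∂P :=
        integral_nonneg fun p => mul_self_nonneg _
      have hcs' : (∫ p, (g p.1 * g p.2) * W p.1 p.2 ∂P) ^ 2
          ≤ (∫ p, (g p.1 * g p.2) * (g p.1 * g p.2) ∂P)
            * (∫ p, W p.1 p.2 * W p.1 p.2 ∂P) := by
        have heq : (fun p : ℝ × ℝ => (g p.1 * g p.2) * W p.1 p.2)
            = fun p => (fun q : ℝ × ℝ => g q.1 * g q.2) p * (fun q : ℝ × ℝ => W q.1 q.2) p := rfl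
        exact hcs
      rw [hTdef]
      nlinarith
    -- combine
    set r : ℝ := ∫ x in A, ∫ y in B, U x y ∂volume ∂volume with hrdef
    have habs : |r| ^ 4 = (r ^ 2) ^ 2 := by
      rw [← abs_pow]
      rw [abs_of_nonneg (by positivity)]
      ring
    rw [habs]
    have h1 : r ^ 2 ≤ ∫ x, h x * h x ∂μ01 := by rw [hr]; exact hB1
    have h2 : (∫ x, h x * h x ∂μ01) ^ 2 ≤ T := by rw [hSC]; exact hD
    calc (r ^ 2) ^ 2 ≤ (∫ x, h x * h x ∂μ01) ^ 2 := by
          exact pow_le_pow_left₀ (sq_nonneg r) h1 2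
      _ ≤ T := h2
  -- conclude via the supremum
  set S : Set ℝ := { r | ∃ A B : Set ℝ, MeasurableSet A ∧ MeasurableSet B ∧
    A ⊆ Set.Icc 0 1 ∧ B ⊆ Set.Icc 0 1 ∧
    r = |∫ x in A, ∫ y in B, U x y ∂volume ∂volume| } with hSdef
  have h0S : (0:ℝ) ∈ S := by
    refine ⟨∅, ∅, MeasurableSet.empty, MeasurableSet.empty, Set.empty_subset _,
      Set.empty_subset _, ?_⟩
    simp
  have hub : ∀ r ∈ S, r ≤ T ^ ((1:ℝ)/4) := by
    rintro r ⟨A, B, hA, hB, hAs, hBs, rfl⟩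
    have hk := key A B hA hB hAs hBs
    have hrnn : (0:ℝ) ≤ |∫ x in A, ∫ y in B, U x y ∂volume ∂volume| := abs_nonneg _
    set q := |∫ x in A, ∫ y in B, U x y ∂volume ∂volume|
    have h1 : (q ^ 4) ^ ((1:ℝ)/4) ≤ T ^ ((1:ℝ)/4) :=
      Real.rpow_le_rpow (by positivity) hk (by norm_num)
    have h2 : (q ^ 4) ^ ((1:ℝ)/4) = q := by
      rw [← Real.rpow_natCast q 4, ← Real.rpow_mul hrnn]
      norm_num
    rw [h2] at h1
    exact h1
  have hbdd : BddAbove S := ⟨T ^ ((1:ℝ)/4), fun r hr => hub r hr⟩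
  have hsup_le : sSup S ≤ T ^ ((1:ℝ)/4) := csSup_le ⟨0, h0S⟩ hub
  have hsup_nn : 0 ≤ sSup S := le_csSup hbdd h0S
  have hfinal : sSup S ^ 4 ≤ T := by
    calc sSup S ^ 4 ≤ (T ^ ((1:ℝ)/4)) ^ 4 := pow_le_pow_left₀ hsup_nn hsup_le 4
      _ = T := by
        rw [← Real.rpow_natCast (T ^ ((1:ℝ)/4)) 4, ← Real.rpow_mul hT0]
        norm_num
  rw [hRHS]
  exact hfinal
end

section
/- For every triangle-free finite simple graph F, with G_n = K_n^{⊗ n²} and p_n = (1 − 1/n)^{n²}, the normalized homomorphism density t_{p_n}(F, G_n) converges to 1 as n → ∞. -/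
/-!
Homomorphisms `F → K_n^{⊗m}` are `m`-tuples of proper `n`-colourings of `F`, so the normalized
density equals `(P_F(n) / (n^{|F|} (1 - 1/n)^{e(F)}))^{n²}`, where `P_F` is the chromatic
polynomial. Whitney's expansion gives `P_F(n) = ∑_{T ⊆ E(F)} (-1)^{|T|} n^{c(T)}`, with `c(T)`
the number of components of `(V, T)`, while `n^{|F|} (1 - 1/n)^{e(F)}` expands as
`∑_T (-1)^{|T|} n^{|F| - |T|}`. The two sums agree on forests `T`, where `c(T) = |F| - |T|`. Any
other `T` contains a cycle, of length at least four because `F` is triangle-free, so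
`c(T) ≤ |F| - 3` and `|T| ≥ 3`. Hence the ratio is `1 + O(n⁻³)`, and its `n²`-th power tends
to `1`.
-/

open Filter

open Finset Topology

theorem one_sub_inv_pow_card_eq_sum {ι K : Type*} [Field K] (s : Finset ι) (x : K) :
    (1 - x⁻¹) ^ #s = ∑ t ∈ s.powerset, (-1) ^ #t / x ^ #t := by
  rw [sub_eq_neg_add, ← sum_pow_mul_eq_add_pow]
  refine sum_congr rfl fun t _ => ?_
  rw [one_pow, mul_one, neg_pow, inv_pow, div_eq_mul_inv]

theorem abs_pow_sub_pow_div_pow_le {x : ℝ} (hx : 1 ≤ x) {c t v : ℕ} (hv : v ≤ c + t)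
    (h : c + t = v ∨ c + 3 ≤ v) : |x ^ c - x ^ v / x ^ t| ≤ x ^ v / x ^ 3 := by
  have hx0 : 0 < x := one_pos.trans_le hx
  rcases h with h | h
  · rw [← h, pow_add, mul_div_cancel_right₀ _ (pow_pos hx0 t).ne', sub_self, abs_zero]
    positivity
  · refine abs_sub_le_of_nonneg_of_le (by positivity) ?_ (by positivity) ?_
    · rw [le_div_iff₀ (by positivity), ← pow_add]
      exact pow_le_pow_right₀ hx h
    · exact div_le_div_of_nonneg_left (by positivity) (by positivity)
        (pow_le_pow_right₀ hx (by omega))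

theorem tendsto_pow_of_tendsto_mul_abs_sub_one {x : ℕ → ℝ} {m : ℕ → ℕ}
    (h : Tendsto (fun n => m n * |x n - 1|) atTop (𝓝 0)) :
    Tendsto (fun n => x n ^ m n) atTop (𝓝 1) := by
  have hlower : Tendsto (fun n => 1 - m n * |x n - 1|) atTop (𝓝 1) := by
    simpa using h.const_sub 1
  have hupper : Tendsto (fun n => Real.exp (m n * |x n - 1|)) atTop (𝓝 1) := by
    have := (Real.continuous_exp.tendsto 0).comp h
    rwa [Real.exp_zero] at this
  refine tendsto_of_tendsto_of_tendsto_of_le_of_le' hlower hupper ?_ (.of_forall fun n => ?_)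
  · filter_upwards [h.eventually (ge_mem_nhds one_pos)] with n hn
    rcases Nat.eq_zero_or_pos (m n) with hm | hm
    · simp [hm]
    -- Bernoulli's inequality, which needs `x n ≥ -1`.
    have hx : |x n - 1| ≤ 1 := by
      calc |x n - 1| ≤ m n * |x n - 1| :=
            le_mul_of_one_le_left (abs_nonneg _) (by exact_mod_cast hm)
        _ ≤ 1 := hn
    calc 1 - m n * |x n - 1| ≤ 1 + m n * (x n - 1) := by
          nlinarith [neg_abs_le (x n - 1), (Nat.cast_nonneg (m n) : (0 : ℝ) ≤ m n)]
      _ ≤ (1 + (x n - 1)) ^ m n := one_add_mul_le_pow (by linarith [(abs_le.1 hx).1]) _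
      _ = x n ^ m n := by rw [add_sub_cancel]
  · calc x n ^ m n ≤ |x n| ^ m n := (le_abs_self _).trans (abs_pow _ _).le
      _ ≤ Real.exp |x n - 1| ^ m n := by
          gcongr
          calc |x n| ≤ |x n - 1| + 1 := by simpa using abs_sub_abs_le_abs_sub (x n) 1
            _ ≤ _ := Real.add_one_le_exp _
      _ = Real.exp (m n * |x n - 1|) := (Real.exp_nat_mul _ _).symm

namespace SimpleGraph

variable {V α : Type*}

noncomputable def numComponents (T : Finset (Sym2 V)) : ℕ :=
  Nat.card (fromEdgeSet (T : Set (Sym2 V))).ConnectedComponent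

section Components

variable {G : SimpleGraph V} {u w : V}

theorem reachable_or_of_reachable_sup_edge {a b : V} (h : (G ⊔ edge u w).Reachable a b) :
    G.Reachable a b ∨ (G.Reachable a u ∧ G.Reachable w b) ∨
      (G.Reachable a w ∧ G.Reachable u b) := by
  rw [reachable_iff_reflTransGen] at h
  induction h with
  | refl => exact .inl .rfl
  | tail _ hbc ih =>
    rcases hbc with hbc | hbc
    · have := hbc.reachable
      rcases ih with h | h | h
      · exact .inl (h.trans this)
      · exact .inr (.inl ⟨h.1, h.2.trans this⟩)
      · exact .inr (.inr ⟨h.1, h.2.trans this⟩)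
    · obtain ⟨⟨rfl, rfl⟩ | ⟨rfl, rfl⟩, -⟩ := (edge_adj ..).1 hbc
      · rcases ih with h | h | h
        · exact .inr (.inl ⟨h, .rfl⟩)
        · exact .inr (.inl ⟨h.1, .rfl⟩)
        · exact .inl h.1
      · rcases ih with h | h | h
        · exact .inr (.inr ⟨h, .rfl⟩)
        · exact .inl h.1
        · exact .inr (.inr ⟨h.1, .rfl⟩)

theorem card_connectedComponent_sup_edge_of_reachable (h : G.Reachable u w) :
    Nat.card (G ⊔ edge u w).ConnectedComponent = Nat.card G.ConnectedComponent := by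
  refine (Nat.card_eq_of_bijective _ ⟨?_, ConnectedComponent.surjective_map_ofLE
    (le_sup_left : G ≤ G ⊔ edge u w)⟩).symm
  refine ConnectedComponent.ind₂ fun a b hab => ConnectedComponent.sound ?_
  rcases reachable_or_of_reachable_sup_edge (ConnectedComponent.exact hab) with h' | h' | h'
  · exact h'
  · exact h'.1.trans (h.trans h'.2)
  · exact h'.1.trans (h.symm.trans h'.2)

theorem card_connectedComponent_sup_edge_add_one [Finite V] (h : ¬G.Reachable u w) :
    Nat.card (G ⊔ edge u w).ConnectedComponent + 1 = Nat.card G.ConnectedComponent := by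
  classical
  set φ := ConnectedComponent.map (Hom.ofLE (le_sup_left : G ≤ G ⊔ edge u w))
  have hne : G.connectedComponentMk u ≠ G.connectedComponentMk w :=
    fun huw => h (ConnectedComponent.exact huw)
  have hφ : φ (G.connectedComponentMk u) = φ (G.connectedComponentMk w) := by
    have hadj : (G ⊔ edge u w).Adj u w :=
      .inr ((edge_adj ..).2 ⟨.inl ⟨rfl, rfl⟩, fun huw => h (huw ▸ .rfl)⟩)
    exact ConnectedComponent.sound hadj.reachable
  -- The components of `u` and `w` merge: send `w`'s to `none` and every other one to its image.
  let ψ : G.ConnectedComponent → Option (G ⊔ edge u w).ConnectedComponent :=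
    fun c => if c = G.connectedComponentMk w then none else some (φ c)
  have hψ : Function.Bijective ψ := by
    constructor
    · refine ConnectedComponent.ind₂ fun a b hab => ?_
      by_cases ha : G.connectedComponentMk a = G.connectedComponentMk w <;>
        by_cases hb : G.connectedComponentMk b = G.connectedComponentMk w <;>
        simp only [ψ, ha, hb, if_true, if_false, reduceCtorEq, Option.some.injEq] at hab
      · rw [ha, hb]
      · simp only [φ, ConnectedComponent.map_mk] at hab
        rcases reachable_or_of_reachable_sup_edge (ConnectedComponent.exact hab) with h' | h' | h'
        · exact ConnectedComponent.sound h'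
        · exact absurd (ConnectedComponent.sound h'.2.symm) hb
        · exact absurd (ConnectedComponent.sound h'.1) ha
    · rintro (_ | c)
      · exact ⟨_, if_pos rfl⟩
      obtain ⟨a, rfl⟩ : ∃ a, φ a = c := ConnectedComponent.surjective_map_ofLE le_sup_left c
      by_cases ha : a = G.connectedComponentMk w
      · exact ⟨G.connectedComponentMk u, by simp only [ψ, if_neg hne, ha, hφ]⟩
      · exact ⟨a, if_neg ha⟩
  rw [← Finite.card_option, Nat.card_eq_of_bijective ψ hψ]

theorem card_connectedComponent_add_length_le [Fintype V] {p : G.Walk u w} (hp : p.IsPath) :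
    Nat.card G.ConnectedComponent + p.length ≤ Fintype.card V := by
  classical
  -- All vertices of `p` other than `u` can be dropped without losing a component.
  set s := p.support.toFinset.erase u
  have hs : #s = p.length := by
    rw [card_erase_of_mem (by simp), List.toFinset_card_of_nodup hp.support_nodup,
      p.length_support, Nat.add_sub_cancel]
  have hsurj : Function.Surjective fun x : {x // x ∉ s} => G.connectedComponentMk x := by
    refine ConnectedComponent.ind fun z => ?_
    by_cases hz : z ∈ s
    · have hz' : z ∈ p.support := by simpa using mem_of_mem_erase hz
      exact ⟨⟨u, notMem_erase u _⟩, ConnectedComponent.sound (p.takeUntil z hz').reachable⟩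
    · exact ⟨⟨z, hz⟩, rfl⟩
  have hle := Nat.card_le_card_of_surjective _ hsurj
  rw [Nat.card_eq_fintype_card (α := {x // x ∉ s}), Fintype.card_subtype_compl,
    Fintype.card_coe] at hle
  have := card_le_univ s
  omega

theorem Walk.three_le_length_of_cliqueFree {F H : SimpleGraph V} (hF : F.CliqueFree 3)
    (hHF : H ≤ F) (huw : F.Adj u w) (hH : ¬H.Adj u w) (p : H.Walk u w) : 3 ≤ p.length := by
  classical
  rcases p with _ | ⟨h₁, _ | ⟨h₂, _ | ⟨h₃, p⟩⟩⟩
  · exact absurd rfl huw.ne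
  · exact absurd h₁ hH
  · exact absurd (is3Clique_triple_iff.2 ⟨hHF h₁, huw, hHF h₂⟩) (hF _)
  · simp

theorem card_connectedComponent_bot :
    Nat.card (⊥ : SimpleGraph V).ConnectedComponent = Nat.card V :=
  (Nat.card_eq_of_bijective _ ⟨fun _ _ h => reachable_bot.1 (ConnectedComponent.exact h),
    ConnectedComponent.ind fun v => ⟨v, rfl⟩⟩).symm

end Components

section EdgeSets

theorem fromEdgeSet_insert (s : Set (Sym2 V)) (u w : V) :
    fromEdgeSet (insert s(u, w) s) = fromEdgeSet s ⊔ edge u w := by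
  rw [Set.insert_eq, fromEdgeSet_union, sup_comm]
  rfl

variable [Fintype V]

theorem numComponents_empty : numComponents (∅ : Finset (Sym2 V)) = Fintype.card V := by
  rw [numComponents, coe_empty, fromEdgeSet_empty, card_connectedComponent_bot,
    Nat.card_eq_fintype_card]

theorem card_le_numComponents_add_card (T : Finset (Sym2 V)) :
    Fintype.card V ≤ numComponents T + #T := by
  classical
  induction T using Finset.induction_on with
  | empty => simp [numComponents_empty]
  | insert e T he ih =>
    induction e using Sym2.ind with | h u w =>
    rw [numComponents, coe_insert, fromEdgeSet_insert, card_insert_of_notMem he]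
    by_cases h : (fromEdgeSet (T : Set (Sym2 V))).Reachable u w
    · rw [card_connectedComponent_sup_edge_of_reachable h]
      exact ih.trans (Nat.le_succ _)
    · have := card_connectedComponent_sup_edge_add_one h
      rw [numComponents] at ih
      omega

theorem numComponents_add_card_eq_or_add_three_le {F : SimpleGraph V} [DecidableRel F.Adj]
    (hF : F.CliqueFree 3) {T : Finset (Sym2 V)} (hT : T ⊆ F.edgeFinset) :
    numComponents T + #T = Fintype.card V ∨ numComponents T + 3 ≤ Fintype.card V := by
  classical
  induction T using Finset.induction_on with
  | empty => exact .inl (by simp [numComponents_empty])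
  | insert e T he ih =>
    obtain ⟨he', hTF⟩ := insert_subset_iff.1 hT
    induction e using Sym2.ind with | h u w =>
    have huw : F.Adj u w := by simpa using he'
    rw [numComponents, coe_insert, fromEdgeSet_insert, card_insert_of_notMem he]
    by_cases h : (fromEdgeSet (T : Set (Sym2 V))).Reachable u w
    · -- The new edge closes a cycle, of length at least four since `F` has no triangles.
      rw [card_connectedComponent_sup_edge_of_reachable h]
      obtain ⟨p⟩ := h
      have hle : fromEdgeSet (T : Set (Sym2 V)) ≤ F := by
        rw [fromEdgeSet_le]
        exact fun e he => mem_edgeFinset.1 (hTF he.1)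
      have h3 := p.bypass.three_le_length_of_cliqueFree hF hle huw
        fun hadj => he ((fromEdgeSet_adj _).1 hadj).1
      have := card_connectedComponent_add_length_le p.bypass_isPath
      omega
    · have := card_connectedComponent_sup_edge_add_one h
      have := ih hTF
      rw [numComponents] at this
      omega

end EdgeSets

theorem card_fun_constant_on_adj [Finite V] (G : SimpleGraph V) :
    Nat.card {f : V → α // ∀ ⦃v w⦄, G.Adj v w → f v = f w} =
      Nat.card α ^ Nat.card G.ConnectedComponent := by
  have hconst (f : {f : V → α // ∀ ⦃v w⦄, G.Adj v w → f v = f w}) {v w : V}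
      (p : G.Walk v w) : f.1 v = f.1 w := by
    induction p with
    | nil => rfl
    | cons h _ ih => exact (f.2 h).trans ih
  rw [← Nat.card_fun]
  exact Nat.card_congr
    { toFun := fun f => ConnectedComponent.lift f.1 fun _ _ p _ => hconst f p
      invFun := fun g => ⟨g ∘ G.connectedComponentMk, fun _ _ h =>
        congrArg g (ConnectedComponent.sound h.reachable)⟩
      left_inv := fun _ => rfl
      right_inv := fun g => funext (ConnectedComponent.ind fun _ => rfl) }

section Whitney

variable [Fintype V] [Fintype α]

variable (α) in
def monochromatic [DecidableEq V] [DecidableEq α] (e : Sym2 V) : Finset (V → α) :=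
  {f | (e.map f).IsDiag}

theorem card_inf_monochromatic [DecidableEq V] [DecidableEq α] (T : Finset (Sym2 V)) :
    #(T.inf (monochromatic α)) = Nat.card α ^ numComponents T := by
  rw [numComponents, ← card_fun_constant_on_adj, ← Nat.card_eq_finsetCard]
  refine Nat.card_congr (Equiv.subtypeEquivRight fun f => ?_)
  simp only [mem_inf, monochromatic, mem_filter, mem_univ, true_and, fromEdgeSet_adj, mem_coe,
    Sym2.forall, Sym2.map_mk, Sym2.mk_isDiag_iff]
  exact ⟨fun h v w hvw => h v w hvw.1,
    fun h v w hvw => (eq_or_ne v w).elim (fun hvw' => hvw' ▸ rfl) fun hne => h ⟨hvw, hne⟩⟩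

theorem card_coloring_eq_sum (F : SimpleGraph V) [DecidableRel F.Adj] :
    (Nat.card (F.Coloring α) : ℤ) =
      ∑ T ∈ F.edgeFinset.powerset, (-1) ^ #T * (Nat.card α : ℤ) ^ numComponents T := by
  classical
  have hproper (f : V → α) : (f ∈ F.edgeFinset.inf fun e => (monochromatic α e)ᶜ) ↔
      ∀ ⦃v w⦄, F.Adj v w → f v ≠ f w := by
    simp only [mem_inf, mem_compl, monochromatic, mem_filter, mem_univ, true_and, Sym2.forall,
      mem_edgeFinset, mem_edgeSet, Sym2.map_mk, Sym2.mk_isDiag_iff]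
  have hcard : Nat.card (F.Coloring α) =
      #(F.edgeFinset.inf fun e => (monochromatic α e)ᶜ) := by
    rw [← Nat.card_eq_finsetCard]
    exact Nat.card_congr
      { toFun := fun C => ⟨C, (hproper C).2 fun _ _ => C.valid⟩
        invFun := fun f => Coloring.mk f.1 fun h => (hproper f.1).1 f.2 h
        left_inv := fun _ => rfl
        right_inv := fun _ => rfl }
  simp only [hcard, inclusion_exclusion_card_inf_compl, card_inf_monochromatic, Nat.cast_pow]

end Whitney

def homTensorPowEquiv (F : SimpleGraph V) {n m : ℕ} (hm : m ≠ 0) :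
    (F →g tensorPow n m) ≃ (Fin m → F.Coloring (Fin n)) where
  toFun φ i := Coloring.mk (fun v => φ v i) fun h => (φ.map_rel h).2 i
  invFun C := ⟨fun v i => C i v, fun h => ⟨fun heq =>
    (C ⟨0, Nat.pos_of_ne_zero hm⟩).valid h (congrFun heq _), fun i => (C i).valid h⟩⟩
  left_inv _ := rfl
  right_inv _ := rfl

theorem homCount_tensorPow (F : SimpleGraph V) {n m : ℕ} (hm : m ≠ 0) :
    homCount F (tensorPow n m) = Nat.card (F.Coloring (Fin n)) ^ m := by
  rw [homCount, Nat.card_congr (homTensorPowEquiv F hm), Nat.card_fun, Nat.card_fin]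

section Estimates

variable [Fintype V] (F : SimpleGraph V) [DecidableRel F.Adj]

theorem abs_card_coloring_sub_le (hF : F.CliqueFree 3) {n : ℕ} (hn : 1 ≤ n) :
    |(Nat.card (F.Coloring (Fin n)) : ℝ) -
        (n : ℝ) ^ Fintype.card V * (1 - (n : ℝ)⁻¹) ^ #F.edgeFinset| ≤
      2 ^ #F.edgeFinset * ((n : ℝ) ^ Fintype.card V / (n : ℝ) ^ 3) := by
  have hn' : (1 : ℝ) ≤ n := by exact_mod_cast hn
  have hwhitney : (Nat.card (F.Coloring (Fin n)) : ℝ) =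
      ∑ T ∈ F.edgeFinset.powerset, (-1) ^ #T * (n : ℝ) ^ numComponents T := by
    have := card_coloring_eq_sum (α := Fin n) F
    rw [Nat.card_fin] at this
    exact_mod_cast this
  rw [hwhitney, one_sub_inv_pow_card_eq_sum, mul_sum, ← sum_sub_distrib]
  calc _ ≤ ∑ T ∈ F.edgeFinset.powerset, |(n : ℝ) ^ numComponents T -
          (n : ℝ) ^ Fintype.card V / (n : ℝ) ^ #T| := by
        refine (abs_sum_le_sum_abs _ _).trans_eq (sum_congr rfl fun T _ => ?_)
        rw [mul_div_left_comm, ← mul_sub, abs_mul, abs_neg_one_pow, one_mul]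
    _ ≤ ∑ _T ∈ F.edgeFinset.powerset, (n : ℝ) ^ Fintype.card V / (n : ℝ) ^ 3 :=
        sum_le_sum fun T hT => abs_pow_sub_pow_div_pow_le hn' (card_le_numComponents_add_card T)
          (numComponents_add_card_eq_or_add_three_le hF (mem_powerset.1 hT))
    _ = _ := by rw [sum_const, card_powerset, nsmul_eq_mul, Nat.cast_pow, Nat.cast_two]

theorem abs_card_coloring_div_sub_one_le (hF : F.CliqueFree 3) {n : ℕ} (hn : 2 ≤ n) :
    |Nat.card (F.Coloring (Fin n)) /
        ((n : ℝ) ^ Fintype.card V * (1 - (n : ℝ)⁻¹) ^ #F.edgeFinset) - 1| ≤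
      4 ^ #F.edgeFinset / (n : ℝ) ^ 3 := by
  have hn' : (2 : ℝ) ≤ n := by exact_mod_cast hn
  have hD : (n : ℝ) ^ Fintype.card V / 2 ^ #F.edgeFinset ≤
      (n : ℝ) ^ Fintype.card V * (1 - (n : ℝ)⁻¹) ^ #F.edgeFinset := by
    rw [div_eq_mul_inv, ← inv_pow]
    gcongr
    linarith [inv_anti₀ two_pos hn']
  have hDpos : 0 < (n : ℝ) ^ Fintype.card V * (1 - (n : ℝ)⁻¹) ^ #F.edgeFinset :=
    lt_of_lt_of_le (by positivity) hD
  rw [div_sub_one hDpos.ne', abs_div, abs_of_pos hDpos, div_le_iff₀ hDpos]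
  calc _ ≤ 2 ^ #F.edgeFinset * ((n : ℝ) ^ Fintype.card V / (n : ℝ) ^ 3) :=
        abs_card_coloring_sub_le F hF (by omega)
    _ = 4 ^ #F.edgeFinset / (n : ℝ) ^ 3 * ((n : ℝ) ^ Fintype.card V / 2 ^ #F.edgeFinset) := by
        rw [show (4 : ℝ) = 2 * 2 by norm_num, mul_pow]
        field_simp
    _ ≤ _ := by gcongr

end Estimates

end SimpleGraph

theorem triangle_free_density_tendsto_one_general {V : Type*} [Fintype V]
    (F : SimpleGraph V) [DecidableRel F.Adj] (hF : F.CliqueFree 3) :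
    Tendsto (fun n : ℕ => (homCount F (tensorPow n (n ^ 2)) : ℝ) /
        (((1 - 1 / (n : ℝ)) ^ (n ^ 2)) ^ F.edgeFinset.card
          * ((n : ℝ) ^ (n ^ 2)) ^ (Fintype.card V)))
      atTop (nhds 1) := by
  set r : ℕ → ℝ := fun n => Nat.card (F.Coloring (Fin n)) /
    ((n : ℝ) ^ Fintype.card V * (1 - (n : ℝ)⁻¹) ^ #F.edgeFinset)
  have hdensity : ∀ᶠ n : ℕ in atTop, r n ^ (n ^ 2) =
      (homCount F (tensorPow n (n ^ 2)) : ℝ) / (((1 - 1 / (n : ℝ)) ^ (n ^ 2)) ^ #F.edgeFinset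
        * ((n : ℝ) ^ (n ^ 2)) ^ (Fintype.card V)) := by
    filter_upwards [eventually_ne_atTop 0] with n hn
    rw [F.homCount_tensorPow (pow_ne_zero 2 hn), Nat.cast_pow, div_pow, one_div]
    ring
  have hsmall : Tendsto (fun n : ℕ => ((n ^ 2 : ℕ) : ℝ) * |r n - 1|) atTop (𝓝 0) := by
    refine squeeze_zero' (.of_forall fun _ => by positivity) ?_
      (tendsto_const_div_atTop_nhds_zero_nat (4 ^ #F.edgeFinset : ℝ))
    filter_upwards [eventually_ge_atTop 2] with n hn
    calc _ ≤ (n : ℝ) ^ 2 * (4 ^ #F.edgeFinset / (n : ℝ) ^ 3) := by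
          push_cast
          gcongr
          exact F.abs_card_coloring_div_sub_one_le hF hn
      _ = _ := by field_simp
  exact (tendsto_pow_of_tendsto_mul_abs_sub_one hsmall).congr' hdensity

/-- For every triangle-free finite graph `F`, with `G_n = K_n^{⊗n²}` and
`p_n = (1-1/n)^{n²}`, the normalized density `t_{p_n}(F, G_n)` converges to `1`. -/
theorem triangle_free_density_tendsto_one {V : Type*} [Fintype V] [DecidableEq V]
    (F : SimpleGraph V) [DecidableRel F.Adj] (hF : F.CliqueFree 3) :
    Tendsto (fun n : ℕ => (homCount F (tensorPow n (n ^ 2)) : ℝ) /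
        (((1 - 1 / (n : ℝ)) ^ (n ^ 2)) ^ F.edgeFinset.card
          * ((n : ℝ) ^ (n ^ 2)) ^ (Fintype.card V)))
      atTop (nhds 1) :=
  triangle_free_density_tendsto_one_general F hF
end
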